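/- arXiv:2510.04557 — 5 statements merged into one kernel-verified Lean document; each statement's English description precedes it below -/
import Mathlib

section
/- Let T be a tree with at least 3 vertices, with the set of leaves as boundary, and let r be the inscribed radius of T. If the diameter of T equals 2r, then λ₁(T) ≥ 4·sin²(π/(4r+2)) ≥ 1/r². -/
open scoped Classical
open Finset

/-- The Dirichlet energy `∑_{{x,y} ∈ E} (f(x) - f(y))²` of a function on the vertices,
computed as half of the sum over ordered adjacent pairs. -/
noncomputable def dirichletForm {V : Type*} [Fintype V] (G : SimpleGraph V) (f : V → ℝ) : ℝ :=
  (∑ x : V, ∑ y : V, if G.Adj x y then (f x - f y) ^ 2 else 0) / 2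

/-- The first Dirichlet eigenvalue of a graph `G` with boundary `B`:
the infimum of Rayleigh quotients of nonzero functions vanishing on `B`. -/
noncomputable def lambda1 {V : Type*} [Fintype V] (G : SimpleGraph V) (B : Finset V) : ℝ :=
  sInf { r : ℝ | ∃ f : V → ℝ, (∀ x ∈ B, f x = 0) ∧ f ≠ 0 ∧
    r = dirichletForm G f / ∑ x ∈ Bᶜ, f x ^ 2 }

/-- The distance from a vertex to a set of vertices. -/
noncomputable def distToSet {V : Type*} (G : SimpleGraph V) (B : Finset V) (v : V) : ℕ :=
  sInf { n : ℕ | ∃ b ∈ B, G.dist v b = n }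

/-- The inscribed radius of a graph with boundary: `max_{v ∈ V} dist(v, B)`. -/
noncomputable def inradius {V : Type*} [Fintype V] (G : SimpleGraph V) (B : Finset V) : ℕ :=
  Finset.univ.sup fun v => distToSet G B v

/-- The diameter of a graph: `max_{v,w ∈ V} dist(v, w)`. -/
noncomputable def graphDiam {V : Type*} [Fintype V] (G : SimpleGraph V) : ℕ :=
  Finset.univ.sup fun v => Finset.univ.sup fun w => G.dist v w

/-- The set of leaves (degree-one vertices) of a graph. -/
noncomputable def leaves {V : Type*} [Fintype V] (G : SimpleGraph V) : Finset V :=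
  Finset.univ.filter fun v => G.degree v = 1


namespace StmtAux

open SimpleGraph Walk

variable {V : Type*} {T : SimpleGraph V}


lemma getVert_mem_support {u v : V} (p : T.Walk u v) (i : ℕ) : p.getVert i ∈ p.support := by
  induction p generalizing i with
  | nil => simp [Walk.getVert]
  | cons h p ih =>
    cases i with
    | zero => simp
    | succ n => simp only [Walk.getVert_cons_succ, Walk.support_cons, List.mem_cons]; right; exact ih n

lemma path_length_eq_dist (hT : T.IsTree) {u v : V} (p : T.Walk u v) (hp : p.IsPath) :
    p.length = T.dist u v := by
  obtain ⟨q, hq, hql⟩ := hT.isConnected.exists_path_of_dist u v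
  have := (hT.existsUnique_path u v).unique hp hq
  rw [this, hql]

lemma dist_le_of_mem_support {u v x : V} {p : T.Walk u v} (hx : x ∈ p.support) :
    T.dist u x ≤ p.length :=
  le_trans (SimpleGraph.dist_le (p.takeUntil x hx)) (Walk.length_takeUntil_le p hx)

lemma takeUntil_add_dropUntil_length {u v x : V} (p : T.Walk u v) (hx : x ∈ p.support) :
    (p.takeUntil x hx).length + (p.dropUntil x hx).length = p.length := by
  rw [← Walk.length_append, Walk.take_spec]

lemma concat_isPath {u v w : V} {p : T.Walk u v} (hp : p.IsPath) (h : T.Adj v w)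
    (hw : w ∉ p.support) : (p.concat h).IsPath := by
  rw [← Walk.isPath_reverse_iff, Walk.reverse_concat, Walk.cons_isPath_iff]
  refine ⟨hp.reverse, ?_⟩
  rw [Walk.support_reverse, List.mem_reverse]
  exact hw

lemma adj_dist_cases (hT : T.IsTree) {u v : V} (h : T.Adj u v) (c : V) :
    T.dist c v = T.dist c u + 1 ∨ T.dist c u = T.dist c v + 1 := by
  have hconn := hT.isConnected
  have h1 : T.dist u v = 1 := SimpleGraph.dist_eq_one_iff_adj.mpr h
  have h1' : T.dist v u = 1 := SimpleGraph.dist_eq_one_iff_adj.mpr h.symm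
  have hub : T.dist c v ≤ T.dist c u + 1 := by
    have := hconn.dist_triangle (u := c) (v := u) (w := v); omega
  have hlb : T.dist c u ≤ T.dist c v + 1 := by
    have := hconn.dist_triangle (u := c) (v := v) (w := u); omega
  have hne : T.dist c v ≠ T.dist c u := by
    intro heq
    obtain ⟨p, hp, hpl⟩ := hconn.exists_path_of_dist c u
    by_cases hv : v ∈ p.support
    · have hd1 : T.dist c v ≤ (p.takeUntil v hv).length := SimpleGraph.dist_le _
      have hd2 := takeUntil_add_dropUntil_length p hv
      have hd3 : (p.dropUntil v hv).length ≠ 0 := by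
        intro h0
        exact h.ne' (Walk.eq_of_length_eq_zero h0)
      omega
    · have hq : (p.concat h).IsPath := concat_isPath hp h hv
      have := path_length_eq_dist hT _ hq
      rw [Walk.length_concat] at this
      omega
  omega

lemma parent_unique (hT : T.IsTree) {c v y₁ y₂ : V} (h₁ : T.Adj v y₁) (h₂ : T.Adj v y₂)
    (hd₁ : T.dist c y₁ + 1 = T.dist c v) (hd₂ : T.dist c y₂ + 1 = T.dist c v) : y₁ = y₂ := by
  have hconn := hT.isConnected
  obtain ⟨p₁, hp₁, hl₁⟩ := hconn.exists_path_of_dist c y₁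
  obtain ⟨p₂, hp₂, hl₂⟩ := hconn.exists_path_of_dist c y₂
  have hv₁ : v ∉ p₁.support := fun hv => by
    have := dist_le_of_mem_support hv; omega
  have hv₂ : v ∉ p₂.support := fun hv => by
    have := dist_le_of_mem_support hv; omega
  have hq₁ : (p₁.concat h₁.symm).IsPath := concat_isPath hp₁ h₁.symm hv₁
  have hq₂ : (p₂.concat h₂.symm).IsPath := concat_isPath hp₂ h₂.symm hv₂
  have heq := (hT.existsUnique_path c v).unique hq₁ hq₂
  have e₁ : (p₁.concat h₁.symm).reverse.getVert 1 = y₁ := by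
    rw [Walk.reverse_concat]; exact Walk.snd_cons _ _
  have e₂ : (p₂.concat h₂.symm).reverse.getVert 1 = y₂ := by
    rw [Walk.reverse_concat]; exact Walk.snd_cons _ _
  rw [← e₁, ← e₂, heq]

lemma exists_parent (hT : T.IsTree) {c v : V} {n : ℕ} (hd : T.dist c v = n + 1) :
    ∃ y, T.Adj v y ∧ T.dist c y = n := by
  have hconn := hT.isConnected
  obtain ⟨p, hp, hl⟩ := hconn.exists_path_of_dist c v
  have hnil : ¬ p.reverse.Nil := by
    rw [Walk.nil_iff_length_eq, Walk.length_reverse]; omega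
  refine ⟨p.reverse.getVert 1, Walk.adj_snd hnil, ?_⟩
  have hmem : p.reverse.getVert 1 ∈ p.support := by
    have := getVert_mem_support p.reverse 1
    rwa [Walk.support_reverse, List.mem_reverse] at this
  have hle : T.dist c (p.reverse.getVert 1) ≤ p.length := dist_le_of_mem_support hmem
  rcases adj_dist_cases (u := v) (v := p.reverse.getVert 1) hT (Walk.adj_snd hnil) c with h | h <;> omega



lemma isPath_append {u v w : V} {p : T.Walk u v} {q : T.Walk v w} (hp : p.IsPath) (hq : q.IsPath)
    (h : ∀ x, x ∈ p.support → x ∈ q.support → x = v) : (p.append q).IsPath := by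
  rw [Walk.isPath_def, Walk.support_append]
  refine List.Nodup.append hp.support_nodup hq.support_nodup.tail ?_
  intro x hxp hxq
  have hxq' : x ∈ q.support := List.mem_of_mem_tail hxq
  have hxv := h x hxp hxq'
  subst hxv
  have hnd := hq.support_nodup
  rw [q.support_eq_cons] at hnd
  exact (List.nodup_cons.mp hnd).1 hxq

lemma getVert_one_takeUntil {u v x : V} (p : T.Walk u v) (hx : x ∈ p.support) (hne : x ≠ u) :
    (p.takeUntil x hx).getVert 1 = p.getVert 1 := by
  have h0 : (p.takeUntil x hx).length ≠ 0 := by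
    intro h
    exact hne (Walk.eq_of_length_eq_zero h).symm
  conv_rhs => rw [← p.take_spec hx]
  rw [Walk.getVert_append]
  split_ifs with h
  · rfl
  · have hl1 : (p.takeUntil x hx).length = 1 := by omega
    rw [show (1 : ℕ) - (p.takeUntil x hx).length = 0 by omega, Walk.getVert_zero, ← hl1,
      Walk.getVert_length]

section Fin

variable [Fintype V]

lemma degree_pos (hT : T.IsTree) (hV : 2 ≤ Fintype.card V) (v : V) : 0 < T.degree v := by
  obtain ⟨w, hw⟩ := Fintype.exists_ne_of_one_lt_card (by omega) v
  have hr := (hT.isConnected v w).some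
  rw [T.degree_pos_iff_exists_adj]
  cases hr with
  | nil => exact absurd rfl hw.symm
  | cons h p => exact ⟨_, h⟩

lemma sum_degrees (hT : T.IsTree) : ∑ v, T.degree v = 2 * (Fintype.card V - 1) := by
  have h := hT.card_edgeFinset
  have h2 := T.sum_degrees_eq_twice_card_edges
  omega

lemma leaves_nonempty (hT : T.IsTree) (hV : 2 ≤ Fintype.card V) : (leaves T).Nonempty := by
  by_contra h
  rw [Finset.not_nonempty_iff_eq_empty] at h
  have hall : ∀ v : V, 2 ≤ T.degree v := by
    intro v
    have h1 : T.degree v ≠ 1 := by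
      intro h1
      have : v ∈ leaves T := by simp [leaves, h1]
      simp [h] at this
    have := degree_pos hT hV v
    omega
  have hle : Fintype.card V * 2 ≤ ∑ v, T.degree v := by
    calc Fintype.card V * 2 = ∑ _v : V, 2 := by simp [Finset.sum_const, Finset.card_univ, mul_comm]
    _ ≤ ∑ v, T.degree v := Finset.sum_le_sum fun v _ => hall v
  rw [sum_degrees hT] at hle
  omega

lemma exists_nonleaf (hT : T.IsTree) (hV : 3 ≤ Fintype.card V) : ∃ v, v ∉ leaves T := by
  by_contra h
  push_neg at h
  have hall : ∀ v : V, T.degree v = 1 := by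
    intro v
    have := h v
    simpa [leaves] using this
  have : ∑ v, T.degree v = Fintype.card V := by simp [hall, Finset.card_univ]
  rw [sum_degrees hT] at this
  have := degree_pos hT (by omega) (Classical.choice (Fintype.card_pos_iff.mp (by omega)))
  omega

lemma nonleaf_two_le_degree (hT : T.IsTree) (hV : 2 ≤ Fintype.card V) {v : V}
    (h : v ∉ leaves T) : 2 ≤ T.degree v := by
  have h1 : T.degree v ≠ 1 := by
    intro h1
    exact h (by simp [leaves, h1])
  have := degree_pos hT hV v
  omega

variable {B : Finset V}

lemma distToSet_exists (hB : B.Nonempty) (v : V) :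
    ∃ b ∈ B, T.dist v b = distToSet T B v := by
  obtain ⟨b₀, hb₀⟩ := hB
  have : distToSet T B v ∈ { n : ℕ | ∃ b ∈ B, T.dist v b = n } :=
    Nat.sInf_mem ⟨T.dist v b₀, b₀, hb₀, rfl⟩
  exact this

lemma distToSet_le {b : V} (hb : b ∈ B) (v : V) : distToSet T B v ≤ T.dist v b :=
  Nat.sInf_le ⟨b, hb, rfl⟩

lemma distToSet_eq_zero_of_mem {v : V} (hv : v ∈ B) : distToSet T B v = 0 :=
  Nat.le_antisymm (by simpa [SimpleGraph.dist_self] using distToSet_le hv v) (Nat.zero_le _)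

lemma mem_of_distToSet_eq_zero (hT : T.IsTree) (hB : B.Nonempty) {v : V}
    (h : distToSet T B v = 0) : v ∈ B := by
  obtain ⟨b, hb, hd⟩ := distToSet_exists (T := T) hB v
  rw [h] at hd
  have := (hT.isConnected.dist_eq_zero_iff).mp hd
  rwa [this]

end Fin

end StmtAux

namespace StmtAux

open SimpleGraph Walk

set_option linter.unusedSectionVars false

variable {V : Type*} [Fintype V] {T : SimpleGraph V}

lemma center_structure (hT : T.IsTree) (hV : 3 ≤ Fintype.card V) (r : ℕ)
    (hr : r = inradius T (leaves T)) (hdiam : graphDiam T = 2 * r) :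
    ∃ c, ∀ v, distToSet T (leaves T) v + T.dist c v = r := by
  classical
  have hconn := hT.isConnected
  set B := leaves T with hB
  have hBne : B.Nonempty := leaves_nonempty hT (by omega)
  have hdle : ∀ v, distToSet T B v ≤ r := by
    intro v
    rw [hr]
    exact Finset.le_sup (Finset.mem_univ v)
  have hne : (Finset.univ : Finset V).Nonempty := ⟨Classical.choice (Fintype.card_pos_iff.mp (by omega)), Finset.mem_univ _⟩
  obtain ⟨c, _, hc⟩ := Finset.exists_mem_eq_sup Finset.univ hne (fun v => distToSet T B v)
  have hc : r = distToSet T B c := by rw [hr, inradius]; exact hc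
  obtain ⟨v₀, hv₀⟩ := exists_nonleaf hT hV
  have hr1 : 1 ≤ r := by
    have h0 : distToSet T B v₀ ≠ 0 := fun h => hv₀ (mem_of_distToSet_eq_zero hT hBne h)
    have := hdle v₀
    omega
  have hcB : c ∉ B := by
    intro h
    have := distToSet_eq_zero_of_mem (T := T) h
    omega
  have hdd : ∀ u v : V, T.dist u v ≤ 2 * r := by
    intro u v
    rw [← hdiam]
    exact le_trans (Finset.le_sup (f := fun w => T.dist u w) (Finset.mem_univ v))
      (Finset.le_sup (f := fun u => Finset.univ.sup fun w => T.dist u w) (Finset.mem_univ u))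
  have hgeleaf : ∀ ℓ ∈ B, r ≤ T.dist c ℓ := by
    intro ℓ hℓ
    have := distToSet_le (T := T) hℓ c
    omega
  -- S1 : every leaf is at distance exactly r from c
  have hS1 : ∀ ℓ ∈ B, T.dist c ℓ = r := by
    intro ℓ hℓ
    by_contra hnee
    have hgt : r + 1 ≤ T.dist c ℓ := by
      have := hgeleaf ℓ hℓ; omega
    obtain ⟨p, hp, hpl⟩ := hconn.exists_path_of_dist c ℓ
    have hpnil : ¬ p.Nil := by rw [Walk.nil_iff_length_eq]; omega
    have hadj0 : T.Adj c (p.getVert 1) := Walk.adj_snd hpnil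
    have hdeg : 1 < T.degree c := nonleaf_two_le_degree hT (by omega) hcB
    rw [← T.card_neighborFinset_eq_degree] at hdeg
    obtain ⟨w', hw'mem, hw'ne⟩ := Finset.exists_mem_ne hdeg (p.getVert 1)
    rw [T.mem_neighborFinset] at hw'mem
    obtain ⟨ℓ', hℓ'B, hℓ'd⟩ := distToSet_exists (T := T) hBne w'
    obtain ⟨q, hq, hql⟩ := hconn.exists_path_of_dist w' ℓ'
    have hqlen : q.length ≤ r := by
      rw [hql, hℓ'd]; exact hdle w'
    have hcq : c ∉ q.support := by
      intro hcs
      have h1 : (q.takeUntil c hcs).length ≠ 0 := by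
        intro h0
        exact hw'mem.ne' (Walk.eq_of_length_eq_zero h0)
      have h2 : r ≤ (q.dropUntil c hcs).length :=
        le_trans (hgeleaf ℓ' hℓ'B) (SimpleGraph.dist_le _)
      have h3 := takeUntil_add_dropUntil_length q hcs
      omega
    set q' := Walk.cons hw'mem q with hq'def
    have hq' : q'.IsPath := by
      rw [hq'def, Walk.cons_isPath_iff]; exact ⟨hq, hcq⟩
    have hq'len : r ≤ q'.length := by
      have := path_length_eq_dist hT q' hq'
      have := hgeleaf ℓ' hℓ'B
      omega
    -- the two paths from c only share c
    have hdisj : ∀ x, x ∈ p.support → x ∈ q'.support → x = c := by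
      intro x hxp hxq
      by_contra hxc
      have hP := hp.takeUntil hxp
      have hQ := hq'.takeUntil hxq
      have hPQ := (hT.existsUnique_path c x).unique hP hQ
      have e1 : (p.takeUntil x hxp).getVert 1 = p.getVert 1 :=
        getVert_one_takeUntil p hxp hxc
      have e2 : (q'.takeUntil x hxq).getVert 1 = q'.getVert 1 :=
        getVert_one_takeUntil q' hxq hxc
      have e3 : q'.getVert 1 = w' := Walk.snd_cons _ _
      rw [hPQ, e2, e3] at e1
      exact hw'ne e1
    have hbig : (p.reverse.append q').IsPath := by
      refine isPath_append hp.reverse hq' ?_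
      intro x hxp hxq
      refine hdisj x ?_ hxq
      rwa [Walk.support_reverse, List.mem_reverse] at hxp
    have hlen := path_length_eq_dist hT _ hbig
    rw [Walk.length_append, Walk.length_reverse] at hlen
    have := hdd ℓ ℓ'
    omega
  -- children exist at non-leaves
  have hchild : ∀ v, v ∉ B → ∃ y, T.Adj v y ∧ T.dist c y = T.dist c v + 1 := by
    intro v hvB
    have hdeg : 1 < T.degree v := nonleaf_two_le_degree hT (by omega) hvB
    rw [← T.card_neighborFinset_eq_degree] at hdeg
    rcases Nat.eq_zero_or_pos (T.dist c v) with h0 | hpos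
    · have hveqc : c = v := (hconn.dist_eq_zero_iff (u := c) (v := v)).mp h0
      obtain ⟨y, hy, _, _⟩ := Finset.one_lt_card.mp hdeg
      rw [T.mem_neighborFinset] at hy
      refine ⟨y, hy, ?_⟩
      have hadj : T.Adj c y := by rw [hveqc]; exact hy
      rw [h0]
      simpa [SimpleGraph.dist_eq_one_iff_adj] using hadj
    · obtain ⟨y₁, hy₁, y₂, hy₂, hyne⟩ := Finset.one_lt_card.mp hdeg
      rw [T.mem_neighborFinset] at hy₁ hy₂
      rcases adj_dist_cases hT hy₁ c with h1 | h1
      · exact ⟨y₁, hy₁, h1⟩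
      rcases adj_dist_cases hT hy₂ c with h2 | h2
      · exact ⟨y₂, hy₂, h2⟩
      exact absurd (parent_unique (c := c) hT hy₁ hy₂ (by omega) (by omega)) hyne
  -- every vertex lies on a geodesic from c to some leaf
  have hE : ∀ m, ∀ v : V, Fintype.card V ≤ T.dist c v + m →
      ∃ ℓ ∈ B, T.dist c ℓ = T.dist c v + T.dist v ℓ := by
    intro m
    induction m with
    | zero =>
      intro v hv
      obtain ⟨p, hp, hpl⟩ := hconn.exists_path_of_dist c v
      have := hp.length_lt
      omega
    | succ m ih =>
      intro v hv
      by_cases hvB : v ∈ B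
      · exact ⟨v, hvB, by simp [SimpleGraph.dist_self]⟩
      · obtain ⟨y, hadj, hy⟩ := hchild v hvB
        obtain ⟨ℓ, hℓB, hℓ⟩ := ih y (by omega)
        refine ⟨ℓ, hℓB, ?_⟩
        have hd1 : T.dist v y = 1 := SimpleGraph.dist_eq_one_iff_adj.mpr hadj
        have t1 : T.dist v ℓ ≤ T.dist v y + T.dist y ℓ := hconn.dist_triangle
        have t2 : T.dist c ℓ ≤ T.dist c v + T.dist v ℓ := hconn.dist_triangle
        omega
  refine ⟨c, fun v => ?_⟩
  have hle : distToSet T B v + T.dist c v ≤ r := by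
    obtain ⟨ℓ, hℓB, hℓ⟩ := hE (Fintype.card V) v (by omega)
    have h1 : distToSet T B v ≤ T.dist v ℓ := distToSet_le hℓB v
    have h2 := hS1 ℓ hℓB
    omega
  have hge : r ≤ distToSet T B v + T.dist c v := by
    obtain ⟨b, hb, hbd⟩ := distToSet_exists (T := T) hBne v
    have h1 : T.dist c b ≤ T.dist c v + T.dist v b := hconn.dist_triangle
    have h2 := hgeleaf b hb
    omega
  omega



lemma numeric (r : ℕ) (hr1 : 1 ≤ r) :
    1 / (r : ℝ) ^ 2 ≤ 4 * Real.sin (Real.pi / (4 * (r : ℝ) + 2)) ^ 2 := by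
  rcases eq_or_lt_of_le hr1 with h | h
  · have : (r : ℝ) = 1 := by exact_mod_cast h.symm
    rw [this]
    have h6 : 4 * (1 : ℝ) + 2 = 6 := by norm_num
    rw [h6, Real.sin_pi_div_six]
    norm_num
  · have hR : (2 : ℝ) ≤ (r : ℝ) := by exact_mod_cast h
    set R := (r : ℝ) with hRdef
    have hden : (0 : ℝ) < 4 * R + 2 := by linarith
    set x := Real.pi / (4 * R + 2) with hx
    have hπu : Real.pi < 3.15 := Real.pi_lt_d2
    have hπl : 3.141592 < Real.pi := Real.pi_gt_d6
    have hx0 : 0 < x := div_pos Real.pi_pos hden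
    have hx10 : x ≤ Real.pi / 10 := by
      rw [hx]
      apply div_le_div_of_nonneg_left Real.pi_pos.le (by norm_num) (by linarith)
    have hx1 : x ≤ 1 := by nlinarith
    have hx2 : x ^ 2 ≤ 0.0993 := by nlinarith
    have hs : x - x ^ 3 / 4 < Real.sin x := by
      have := Real.sin_gt_sub_cube hx0; nlinarith [pow_pos hx0 3]
    have hxπ : x * (4 * R + 2) = Real.pi := by
      rw [hx]; field_simp
    have hkey : 1 / (2 * R) ≤ x - x ^ 3 / 4 := by
      rw [div_le_iff₀ (by linarith : (0:ℝ) < 2 * R)]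
      have hcube : x ^ 3 = x * x ^ 2 := by ring
      nlinarith [mul_pos hx0 (by linarith : (0:ℝ) < R)]
    have hsin : 1 / (2 * R) ≤ Real.sin x := le_trans hkey hs.le
    have hpos : 0 < 1 / (2 * R) := by positivity
    have : (1 / (2 * R)) ^ 2 ≤ Real.sin x ^ 2 := by
      apply sq_le_sq' <;> nlinarith
    have hRpos : (0:ℝ) < R := by linarith
    calc 1 / R ^ 2 = 4 * (1 / (2 * R)) ^ 2 := by field_simp; ring
    _ ≤ 4 * Real.sin x ^ 2 := by linarith

variable {r : ℕ} {α : ℝ}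

lemma hhalf (hα : α = Real.pi / (4 * (r : ℝ) + 2)) : (2 * (r : ℝ) + 1) * α = Real.pi / 2 := by
  have : (4 * (r : ℝ) + 2) ≠ 0 := by positivity
  rw [hα]; field_simp; ring

lemma alpha_pos (hα : α = Real.pi / (4 * (r : ℝ) + 2)) : 0 < α := by
  rw [hα]; positivity

lemma sin_alpha_pos (hα : α = Real.pi / (4 * (r : ℝ) + 2)) : 0 < Real.sin α := by
  apply Real.sin_pos_of_pos_of_lt_pi (alpha_pos hα)
  rw [hα]
  rw [div_lt_iff₀ (by positivity)]
  nlinarith [Real.pi_pos, (by exact_mod_cast Nat.zero_le r : (0:ℝ) ≤ (r:ℝ))]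

lemma phi_pos (hα : α = Real.pi / (4 * (r : ℝ) + 2)) {k : ℕ} (hk : k ≤ r) :
    0 < Real.sin ((2 * (k : ℝ) + 1) * α) := by
  have hαp := alpha_pos hα
  apply Real.sin_pos_of_pos_of_lt_pi
  · positivity
  · have hle : (2 * (k : ℝ) + 1) ≤ 2 * (r : ℝ) + 1 := by
      have : (k : ℝ) ≤ (r : ℝ) := by exact_mod_cast hk
      linarith
    have := mul_le_mul_of_nonneg_right hle hαp.le
    rw [hhalf hα] at this
    linarith [Real.pi_pos]

lemma delta_eq (k : ℕ) :
    Real.sin ((2 * ((k : ℝ) + 1) + 1) * α) - Real.sin ((2 * (k : ℝ) + 1) * α)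
      = 2 * Real.sin α * Real.cos ((2 * (k : ℝ) + 2) * α) := by
  rw [Real.sin_sub_sin]
  have h1 : ((2 * ((k : ℝ) + 1) + 1) * α - (2 * (k : ℝ) + 1) * α) / 2 = α := by ring
  have h2 : ((2 * ((k : ℝ) + 1) + 1) * α + (2 * (k : ℝ) + 1) * α) / 2 = (2 * (k : ℝ) + 2) * α := by
    ring
  rw [h1, h2]

lemma key_identity (k : ℕ) :
    (Real.sin ((2 * ((k : ℝ) + 1) + 1) * α) - Real.sin ((2 * (k : ℝ) + 1) * α))
      - (Real.sin ((2 * ((k : ℝ) + 2) + 1) * α) - Real.sin ((2 * ((k : ℝ) + 1) + 1) * α))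
      = 4 * Real.sin α ^ 2 * Real.sin ((2 * ((k : ℝ) + 1) + 1) * α) := by
  have hd1 := delta_eq (α := α) k
  have hd2 : Real.sin ((2 * ((k : ℝ) + 2) + 1) * α) - Real.sin ((2 * ((k : ℝ) + 1) + 1) * α)
      = 2 * Real.sin α * Real.cos ((2 * ((k : ℝ) + 1) + 2) * α) := by
    have := delta_eq (α := α) (k + 1)
    push_cast at this
    convert this using 4 <;> ring
  have hc := Real.cos_sub_cos ((2 * (k : ℝ) + 2) * α) ((2 * ((k : ℝ) + 1) + 2) * α)
  have h1 : (((2 * (k : ℝ) + 2) * α + (2 * ((k : ℝ) + 1) + 2) * α)) / 2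
      = (2 * ((k : ℝ) + 1) + 1) * α := by ring
  have h2 : (((2 * (k : ℝ) + 2) * α - (2 * ((k : ℝ) + 1) + 2) * α)) / 2 = -α := by ring
  rw [h1, h2, Real.sin_neg] at hc
  rw [hd1, hd2]
  linear_combination 2 * Real.sin α * hc

lemma cos_nonneg_of (hα : α = Real.pi / (4 * (r : ℝ) + 2)) {k : ℕ} (hk : k + 1 ≤ r) :
    0 ≤ Real.cos ((2 * (k : ℝ) + 2) * α) := by
  have hαp := alpha_pos hα
  apply Real.cos_nonneg_of_mem_Icc
  constructor
  · have : (0:ℝ) ≤ (2 * (k : ℝ) + 2) * α := by positivity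
    have := Real.pi_pos
    linarith
  · have hle : (2 * (k : ℝ) + 2) ≤ 2 * (r : ℝ) + 1 := by
      have : (k : ℝ) + 1 ≤ (r : ℝ) := by exact_mod_cast hk
      linarith
    have := mul_le_mul_of_nonneg_right hle hαp.le
    rw [hhalf hα] at this
    linarith

lemma top_identity (hα : α = Real.pi / (4 * (r : ℝ) + 2)) :
    2 * Real.sin α * Real.cos ((2 * (r : ℝ)) * α) = 2 * Real.sin α ^ 2 := by
  have h1 : (2 * (r : ℝ)) * α = Real.pi / 2 - α := by
    have := hhalf (r := r) hα
    linarith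
  rw [h1, Real.cos_pi_div_two_sub]
  ring

lemma phi_r_eq_one (hα : α = Real.pi / (4 * (r : ℝ) + 2)) :
    Real.sin ((2 * (r : ℝ) + 1) * α) = 1 := by
  rw [hhalf hα, Real.sin_pi_div_two]


end StmtAux


open SimpleGraph StmtAux in
theorem stmt2 {V : Type*} [Fintype V] (T : SimpleGraph V) (hT : T.IsTree)
    (hV : 3 ≤ Fintype.card V) (r : ℕ) (hr : r = inradius T (leaves T))
    (hdiam : graphDiam T = 2 * r) :
    4 * Real.sin (Real.pi / (4 * (r : ℝ) + 2)) ^ 2 ≤ lambda1 T (leaves T) ∧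
    1 / (r : ℝ) ^ 2 ≤ 4 * Real.sin (Real.pi / (4 * (r : ℝ) + 2)) ^ 2 := by
  classical
  have hconn := hT.isConnected
  have hBne : (leaves T).Nonempty := leaves_nonempty hT (by omega)
  obtain ⟨c, hcen⟩ := center_structure hT hV r hr hdiam
  have hdle : ∀ v, distToSet T (leaves T) v ≤ r := fun v => by have := hcen v; omega

  obtain ⟨v₀, hv₀⟩ := exists_nonleaf hT hV
  have hr1 : 1 ≤ r := by
    have h0 : distToSet T (leaves T) v₀ ≠ 0 := fun h =>
      hv₀ (mem_of_distToSet_eq_zero hT hBne h)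
    have := hdle v₀
    omega
  set α := Real.pi / (4 * (r : ℝ) + 2) with hα
  set lam := 4 * Real.sin α ^ 2 with hlam
  refine ⟨?_, numeric r hr1⟩
  have hαpos : 0 < α := alpha_pos hα
  have hsinpos : 0 < Real.sin α := sin_alpha_pos hα
  set φ : ℕ → ℝ := fun k => Real.sin ((2 * (k : ℝ) + 1) * α) with hφ
  have hphipos : ∀ k : ℕ, k ≤ r → 0 < φ k := fun k hk => phi_pos hα hk
  have hdelta : ∀ k : ℕ, φ (k + 1) - φ k = 2 * Real.sin α * Real.cos ((2 * (k : ℝ) + 2) * α) := by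
    intro k
    have := delta_eq (α := α) k
    simp only [hφ]
    push_cast
    convert this using 4 <;> push_cast <;> ring
  have hkey : ∀ k : ℕ, (φ (k + 1) - φ k) - (φ (k + 2) - φ (k + 1)) = lam * φ (k + 1) := by
    intro k
    have := key_identity (α := α) k
    simp only [hφ, hlam]
    push_cast
    convert this using 3 <;> push_cast <;> ring
  have hdnn : ∀ k : ℕ, k + 1 ≤ r → 0 ≤ φ (k + 1) - φ k := by
    intro k hk
    rw [hdelta k]
    have := cos_nonneg_of hα hk
    positivity
  have hφr : φ r = 1 := phi_r_eq_one hα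
  obtain ⟨j, hj⟩ : ∃ j, j + 1 = r := ⟨r - 1, by omega⟩
  have htopφ : 2 * (φ r - φ j) = lam := by
    have h1 : φ r - φ j = 2 * Real.sin α * Real.cos ((2 * (j : ℝ) + 2) * α) := by
      rw [← hj]; exact hdelta j
    have h2 : ((2 : ℝ) * (j : ℝ) + 2) = 2 * (r : ℝ) := by
      have : ((j : ℝ) + 1) = (r : ℝ) := by exact_mod_cast congrArg (Nat.cast : ℕ → ℝ) hj
      linarith
    rw [h1, h2, top_identity hα, hlam]
    ring
  set d : V → ℕ := fun v => distToSet T (leaves T) v with hd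
  have hcen' : ∀ v, d v + T.dist c v = r := hcen
  have hdle' : ∀ v, d v ≤ r := hdle
  set g : V → ℝ := fun v => φ (d v) with hg
  have hgpos : ∀ v, 0 < g v := fun v => hphipos _ (hdle' v)
  -- the discrete Barta inequality at each interior vertex
  have hmain : ∀ x, x ∉ leaves T → lam * g x ≤ ∑ y ∈ T.neighborFinset x, (g x - g y) := by
    intro x hx
    have hdx1 : 1 ≤ d x := by
      have h0 : d x ≠ 0 := fun h => hx (mem_of_distToSet_eq_zero hT hBne h)
      omega
    have hcenx := hcen' x
    have hdeg : 2 ≤ (T.neighborFinset x).card := by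
      have := nonleaf_two_le_degree hT (by omega) hx
      rwa [← T.card_neighborFinset_eq_degree] at this
    by_cases hxc : x = c
    · subst hxc
      have hdc : d x = r := by
        have h0 : T.dist x x = 0 := SimpleGraph.dist_self
        have := hcen' x
        omega
      have hconst : ∀ y ∈ T.neighborFinset x, g x - g y = φ r - φ j := by
        intro y hy
        rw [T.mem_neighborFinset] at hy
        have hd1 : T.dist x y = 1 := SimpleGraph.dist_eq_one_iff_adj.mpr hy
        have hcy := hcen' y
        have hdy : d y = j := by omega
        rw [hg]
        simp only
        rw [hdy, hdc]
      rw [Finset.sum_congr rfl hconst, Finset.sum_const, nsmul_eq_mul]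
      have hΔnn : 0 ≤ φ r - φ j := by
        rw [← hj]; exact hdnn j (by omega)
      have hcard : (2 : ℝ) ≤ ((T.neighborFinset x).card : ℝ) := by exact_mod_cast hdeg
      have hgx : g x = 1 := by simp only [hg]; rw [hdc, hφr]
      rw [hgx]
      nlinarith
    · have htpos : 1 ≤ T.dist c x :=
        hconn.pos_dist_of_ne (fun h => hxc h.symm)
      obtain ⟨i, hi⟩ : ∃ i, d x = i + 1 := ⟨d x - 1, by omega⟩
      have hi1r : i + 1 ≤ r := by omega
      have hi2r : i + 2 ≤ r := by omega
      set N := T.neighborFinset x with hN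
      set P : V → Prop := fun y => T.dist c y = T.dist c x + 1 with hP
      have hsplit : ∀ y ∈ N, ¬ P y ↔ T.dist c x = T.dist c y + 1 := by
        intro y hy
        rw [T.mem_neighborFinset] at hy
        rcases adj_dist_cases hT hy c with h1 | h1
        · simp only [hP]
          constructor
          · intro h2; omega
          · intro h2; omega
        · simp only [hP]
          constructor
          · intro h2; exact h1
          · intro h2 h3; omega
      have hsum : ∑ y ∈ N, (g x - g y)
          = ∑ y ∈ N.filter P, (g x - g y) + ∑ y ∈ N.filter (fun y => ¬ P y), (g x - g y) :=
        (Finset.sum_filter_add_sum_filter_not N P _).symm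
      have hdn : ∀ y ∈ N.filter P, g x - g y = φ (i + 1) - φ i := by
        intro y hy
        rw [Finset.mem_filter] at hy
        have hcy := hcen' y
        have hPy : T.dist c y = T.dist c x + 1 := hy.2
        have hdy : d y = i := by omega
        simp only [hg]; rw [hdy, hi]
      have hup : ∀ y ∈ N.filter (fun y => ¬ P y), g x - g y = φ (i + 1) - φ (i + 2) := by
        intro y hy
        rw [Finset.mem_filter] at hy
        have h2 := (hsplit y hy.1).mp hy.2
        have hcy := hcen' y
        have hdy : d y = i + 2 := by omega
        simp only [hg]; rw [hdy, hi]
      have hupcard : (N.filter (fun y => ¬ P y)).card ≤ 1 := by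
        rw [Finset.card_le_one]
        intro a ha b hb
        rw [Finset.mem_filter] at ha hb
        have ha2 := (hsplit a ha.1).mp ha.2
        have hb2 := (hsplit b hb.1).mp hb.2
        have haadj : T.Adj x a := by rw [← T.mem_neighborFinset]; exact ha.1
        have hbadj : T.Adj x b := by rw [← T.mem_neighborFinset]; exact hb.1
        exact parent_unique (c := c) hT haadj hbadj (by omega) (by omega)
      have hdncard : 1 ≤ (N.filter P).card := by
        have := Finset.card_filter_add_card_filter_not (s := N) (p := P)
        omega
      rw [hsum, Finset.sum_congr rfl hdn, Finset.sum_congr rfl hup,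
        Finset.sum_const, Finset.sum_const, nsmul_eq_mul, nsmul_eq_mul]
      have hgx : g x = φ (i + 1) := by simp only [hg]; rw [hi]
      rw [hgx]
      have hΔ1 : 0 ≤ φ (i + 1) - φ i := hdnn i hi1r
      have hΔ2 : 0 ≤ φ (i + 2) - φ (i + 1) := hdnn (i + 1) hi2r
      have hkeyi := hkey i
      have ha : (1 : ℝ) ≤ ((N.filter P).card : ℝ) := by exact_mod_cast hdncard
      have hb : ((N.filter (fun y => ¬ P y)).card : ℝ) ≤ 1 := by exact_mod_cast hupcard
      have hb0 : (0 : ℝ) ≤ ((N.filter (fun y => ¬ P y)).card : ℝ) := Nat.cast_nonneg _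
      nlinarith
  -- Rayleigh quotient bound
  have hRayleigh : ∀ f : V → ℝ, (∀ x ∈ leaves T, f x = 0) → f ≠ 0 →
      lam ≤ dirichletForm T f / ∑ x ∈ (leaves T)ᶜ, f x ^ 2 := by
    intro f hf0 hfne
    set q : V → ℝ := fun x => f x ^ 2 / g x with hq
    have hqnn : ∀ x, 0 ≤ q x := fun x => div_nonneg (sq_nonneg _) (hgpos x).le
    have step1 : ∀ x y, T.Adj x y →
        q x * (g x - g y) + q y * (g y - g x) ≤ (f x - f y) ^ 2 := by
      intro x y _
      have hgx := hgpos x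
      have hgy := hgpos y
      have hid : (f x - f y) ^ 2 - (q x * (g x - g y) + q y * (g y - g x))
          = (g y * f x - g x * f y) ^ 2 / (g x * g y) := by
        rw [hq]
        field_simp
        ring
      have h0 : 0 ≤ (g y * f x - g x * f y) ^ 2 / (g x * g y) := by positivity
      linarith
    have step2 : ∑ x : V, ∑ y : V, (if T.Adj x y then q x * (g x - g y) + q y * (g y - g x) else 0)
        ≤ ∑ x : V, ∑ y : V, (if T.Adj x y then (f x - f y) ^ 2 else 0) := by
      refine Finset.sum_le_sum fun x _ => Finset.sum_le_sum fun y _ => ?_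
      split_ifs with h
      · exact step1 x y h
      · exact le_refl _
    have hswap : ∑ x : V, ∑ y : V, (if T.Adj x y then q y * (g y - g x) else 0)
        = ∑ x : V, ∑ y : V, (if T.Adj x y then q x * (g x - g y) else 0) := by
      rw [Finset.sum_comm]
      refine Finset.sum_congr rfl fun y _ => Finset.sum_congr rfl fun x _ => ?_
      rw [SimpleGraph.adj_comm]
    have hsplitite : ∀ (p : Prop) [Decidable p] (a b : ℝ),
        (if p then a + b else 0) = (if p then a else 0) + (if p then b else 0) := by
      intro p _ a b
      split <;> simp
    have step3 : ∑ x : V, ∑ y : V, (if T.Adj x y then q x * (g x - g y) + q y * (g y - g x) else 0)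
        = 2 * ∑ x : V, ∑ y : V, (if T.Adj x y then q x * (g x - g y) else 0) := by
      simp only [hsplitite, Finset.sum_add_distrib]
      rw [hswap]
      ring
    have step4 : ∑ x : V, ∑ y : V, (if T.Adj x y then q x * (g x - g y) else 0)
        = ∑ x : V, q x * ∑ y ∈ T.neighborFinset x, (g x - g y) := by
      refine Finset.sum_congr rfl fun x _ => ?_
      rw [T.neighborFinset_eq_filter, Finset.sum_filter, Finset.mul_sum]
      refine Finset.sum_congr rfl fun y _ => ?_
      split_ifs with h
      · rfl
      · rw [mul_zero]
    have step5 : ∀ x : V, lam * f x ^ 2 ≤ q x * ∑ y ∈ T.neighborFinset x, (g x - g y) := by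
      intro x
      by_cases hx : x ∈ leaves T
      · rw [hq]
        simp [hf0 x hx]
      · have h1 := hmain x hx
        have h2 := mul_le_mul_of_nonneg_left h1 (hqnn x)
        have hgx0 : g x ≠ 0 := (hgpos x).ne'
        have h3 : q x * (lam * g x) = lam * f x ^ 2 := by
          rw [hq]
          field_simp
        linarith
    have hsumv : ∑ x ∈ (leaves T)ᶜ, f x ^ 2 = ∑ x : V, f x ^ 2 := by
      rw [← Finset.sum_compl_add_sum (leaves T) (fun x => f x ^ 2)]
      have : ∑ x ∈ leaves T, f x ^ 2 = 0 :=
        Finset.sum_eq_zero fun x hx => by rw [hf0 x hx]; ring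
      rw [this, add_zero]
    have hD : 0 < ∑ x ∈ (leaves T)ᶜ, f x ^ 2 := by
      obtain ⟨x₀, hx₀⟩ : ∃ x, f x ≠ 0 := by
        by_contra h
        push_neg at h
        exact hfne (funext h)
      have hx₀B : x₀ ∈ (leaves T)ᶜ := by
        rw [Finset.mem_compl]
        intro h
        exact hx₀ (hf0 x₀ h)
      exact Finset.sum_pos' (fun x _ => sq_nonneg _)
        ⟨x₀, hx₀B, lt_of_le_of_ne (sq_nonneg _) (Ne.symm (pow_ne_zero 2 hx₀))⟩
    rw [le_div_iff₀ hD]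
    have c1 : lam * ∑ x ∈ (leaves T)ᶜ, f x ^ 2 = ∑ x : V, lam * f x ^ 2 := by
      rw [hsumv, Finset.mul_sum]
    have c2 : ∑ x : V, lam * f x ^ 2 ≤ ∑ x : V, q x * ∑ y ∈ T.neighborFinset x, (g x - g y) :=
      Finset.sum_le_sum fun x _ => step5 x
    have c3 : dirichletForm T f
        = (∑ x : V, ∑ y : V, (if T.Adj x y then (f x - f y) ^ 2 else 0)) / 2 := rfl
    rw [c3, c1]
    rw [← step4] at c2
    linarith [step2, step3, c2]
  -- conclude via le_csInf
  set f₀ : V → ℝ := fun x => if x = v₀ then 1 else 0 with hf₀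
  have hf₀0 : ∀ x ∈ leaves T, f₀ x = 0 := by
    intro x hx
    rw [hf₀]
    simp only
    rw [if_neg]
    intro h
    rw [h] at hx
    exact hv₀ hx
  have hf₀ne : f₀ ≠ 0 := by
    intro h
    have := congrFun h v₀
    simp [hf₀] at this
  apply le_csInf
  · exact ⟨_, f₀, hf₀0, hf₀ne, rfl⟩
  · rintro b ⟨f, hf0, hfne, rfl⟩
    exact hRayleigh f hf0 hfne
end

section
/- Let (G,B) be a finite connected graph with boundary and interior Ω = V∖B. Then λ₁(G,B) ≤ |E(Ω,B)|/|Ω|, where E(Ω,B) is the set of edges with one endpoint in Ω and one endpoint in B. Moreover, equality holds if and only if |Ω| divides |E(Ω,B)| and every interior vertex is adjacent to exactly |E(Ω,B)|/|Ω| boundary vertices. -/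
open scoped Classical
open Finset

lemma dirichlet_split {V : Type*} [Fintype V] (G : SimpleGraph V) (B : Finset V)
    (f : V → ℝ) (hf : ∀ b ∈ B, f b = 0) :
    dirichletForm G f =
      (∑ x ∈ Bᶜ, ∑ y ∈ Bᶜ, if G.Adj x y then (f x - f y) ^ 2 else 0) / 2 +
        ∑ x ∈ Bᶜ, ((B.filter fun y => G.Adj x y).card : ℝ) * f x ^ 2 := by
  classical
  have hB_term : ∀ x : V, ∑ y ∈ B, (if G.Adj x y then (f x - f y) ^ 2 else 0)
      = ((B.filter fun y => G.Adj x y).card : ℝ) * f x ^ 2 := by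
    intro x
    have : ∀ y ∈ B, (if G.Adj x y then (f x - f y) ^ 2 else 0)
        = (if G.Adj x y then f x ^ 2 else 0) := by
      intro y hy
      simp [hf y hy]
    rw [Finset.sum_congr rfl this, ← Finset.sum_filter, Finset.sum_const, nsmul_eq_mul]
  have hsplit : ∑ x : V, ∑ y : V, (if G.Adj x y then (f x - f y) ^ 2 else 0)
      = (∑ x ∈ Bᶜ, ∑ y ∈ Bᶜ, if G.Adj x y then (f x - f y) ^ 2 else 0)
        + 2 * ∑ x ∈ Bᶜ, ((B.filter fun y => G.Adj x y).card : ℝ) * f x ^ 2 := by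
    rw [← Finset.sum_compl_add_sum B
      (f := fun x => ∑ y : V, (if G.Adj x y then (f x - f y) ^ 2 else 0))]
    have h1 : ∑ x ∈ Bᶜ, ∑ y : V, (if G.Adj x y then (f x - f y) ^ 2 else 0)
        = (∑ x ∈ Bᶜ, ∑ y ∈ Bᶜ, if G.Adj x y then (f x - f y) ^ 2 else 0)
          + ∑ x ∈ Bᶜ, ((B.filter fun y => G.Adj x y).card : ℝ) * f x ^ 2 := by
      rw [← Finset.sum_add_distrib]
      refine Finset.sum_congr rfl fun x hx => ?_
      rw [← Finset.sum_compl_add_sum B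
        (f := fun y => (if G.Adj x y then (f x - f y) ^ 2 else 0)), hB_term x]
    have h2 : ∑ x ∈ B, ∑ y : V, (if G.Adj x y then (f x - f y) ^ 2 else 0)
        = ∑ x ∈ Bᶜ, ((B.filter fun y => G.Adj x y).card : ℝ) * f x ^ 2 := by
      have step : ∀ x ∈ B, ∑ y : V, (if G.Adj x y then (f x - f y) ^ 2 else 0)
          = ∑ y ∈ Bᶜ, (if G.Adj x y then f y ^ 2 else 0) := by
        intro x hx
        rw [← Finset.sum_compl_add_sum B
          (f := fun y => (if G.Adj x y then (f x - f y) ^ 2 else 0))]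
        have hz : ∑ y ∈ B, (if G.Adj x y then (f x - f y) ^ 2 else 0) = 0 := by
          refine Finset.sum_eq_zero fun y hy => ?_
          simp [hf x hx, hf y hy]
        rw [hz, add_zero]
        refine Finset.sum_congr rfl fun y hy => ?_
        simp [hf x hx]
      rw [Finset.sum_congr rfl step, Finset.sum_comm]
      refine Finset.sum_congr rfl fun y hy => ?_
      have : ∀ x ∈ B, (if G.Adj x y then f y ^ 2 else 0) = (if G.Adj y x then f y ^ 2 else 0) := by
        intro x hx; simp [SimpleGraph.adj_comm]
      rw [Finset.sum_congr rfl this, ← Finset.sum_filter, Finset.sum_const, nsmul_eq_mul]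
    rw [h1, h2]; ring
  unfold dirichletForm
  rw [hsplit]; ring

lemma card_boundary_edges {V : Type*} [Fintype V] (G : SimpleGraph V) (B : Finset V) :
    {e : Sym2 V | e ∈ G.edgeSet ∧ ∃ x y : V, x ∉ B ∧ y ∈ B ∧ e = s(x, y)}.ncard
      = ∑ x ∈ Bᶜ, (B.filter fun y => G.Adj x y).card := by
  classical
  have hset : {e : Sym2 V | e ∈ G.edgeSet ∧ ∃ x y : V, x ∉ B ∧ y ∈ B ∧ e = s(x, y)}
      = ↑((((Bᶜ : Finset V) ×ˢ B).filter fun p => G.Adj p.1 p.2).image fun p => s(p.1, p.2)) := by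
    ext e
    simp only [Finset.coe_image, Set.mem_image, Finset.mem_coe, Finset.mem_filter,
      Finset.mem_product, Finset.mem_compl, Set.mem_setOf_eq]
    constructor
    · rintro ⟨he, x, y, hx, hy, rfl⟩
      exact ⟨(x, y), ⟨⟨hx, hy⟩, he⟩, rfl⟩
    · rintro ⟨⟨x, y⟩, ⟨⟨hx, hy⟩, hadj⟩, rfl⟩
      exact ⟨hadj, x, y, hx, hy, rfl⟩
  rw [hset, Set.ncard_coe_finset, Finset.card_image_of_injOn, Finset.card_filter,
    Finset.sum_product]
  · refine Finset.sum_congr rfl fun x hx => ?_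
    rw [Finset.card_filter]
  · rintro ⟨x, y⟩ hxy ⟨x', y'⟩ hxy' heq
    simp only [Finset.coe_filter, Set.mem_setOf_eq, Finset.mem_product, Finset.mem_compl] at hxy hxy'
    rw [Sym2.eq_iff] at heq
    rcases heq with ⟨rfl, rfl⟩ | ⟨rfl, rfl⟩
    · rfl
    · exact absurd hxy'.1.2 hxy.1.1

lemma rayleigh_lower {V : Type*} [Fintype V] (G : SimpleGraph V) (B : Finset V) (c : ℝ)
    (hc : 0 ≤ c)
    (hcd : ∀ x ∈ Bᶜ, c ≤ ((B.filter fun y => G.Adj x y).card : ℝ))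
    (r : ℝ) (hr : r ∈ {r : ℝ | ∃ f : V → ℝ, (∀ x ∈ B, f x = 0) ∧ f ≠ 0 ∧
      r = dirichletForm G f / ∑ x ∈ Bᶜ, f x ^ 2}) : c ≤ r := by
  classical
  obtain ⟨f, hfB, hfne, rfl⟩ := hr
  have hQpos : 0 < ∑ x ∈ Bᶜ, f x ^ 2 := by
    have : ∃ x, f x ≠ 0 := by
      by_contra h; push_neg at h; exact hfne (funext h)
    obtain ⟨x, hx⟩ := this
    have hxB : x ∈ Bᶜ := by
      rw [Finset.mem_compl]; intro hxB; exact hx (hfB x hxB)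
    refine Finset.sum_pos' (fun i _ => sq_nonneg _) ⟨x, hxB, ?_⟩
    positivity
  rw [le_div_iff₀ hQpos, dirichlet_split G B f hfB]
  have h1 : c * ∑ x ∈ Bᶜ, f x ^ 2 ≤ ∑ x ∈ Bᶜ, ((B.filter fun y => G.Adj x y).card : ℝ) * f x ^ 2 := by
    rw [Finset.mul_sum]
    exact Finset.sum_le_sum fun x hx => mul_le_mul_of_nonneg_right (hcd x hx) (sq_nonneg _)
  have h2 : 0 ≤ (∑ x ∈ Bᶜ, ∑ y ∈ Bᶜ, if G.Adj x y then (f x - f y) ^ 2 else 0) / 2 := by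
    apply div_nonneg _ (by norm_num)
    refine Finset.sum_nonneg fun x _ => Finset.sum_nonneg fun y _ => ?_
    split <;> positivity
  linarith

theorem stmt4 {V : Type*} [Fintype V] (G : SimpleGraph V) (B : Finset V)
    (hconn : G.Connected)
    (hB : ∀ b ∈ B, ∃ y, y ∉ B ∧ G.Adj b y)
    (hBind : ∀ b ∈ B, ∀ b' ∈ B, ¬ G.Adj b b')
    (hΩne : (Bᶜ : Finset V).Nonempty)
    (hΩconn : (G.induce {v : V | v ∉ B}).Connected)
    (m : ℕ)
    (hm : m = {e : Sym2 V | e ∈ G.edgeSet ∧ ∃ x y : V, x ∉ B ∧ y ∈ B ∧ e = s(x, y)}.ncard) :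
    lambda1 G B ≤ (m : ℝ) / ((Bᶜ : Finset V).card : ℝ) ∧
    (lambda1 G B = (m : ℝ) / ((Bᶜ : Finset V).card : ℝ) ↔
      (Bᶜ : Finset V).card ∣ m ∧
      ∀ x : V, x ∉ B →
        {y : V | G.Adj x y ∧ y ∈ B}.ncard = m / (Bᶜ : Finset V).card) := by
  classical
  set S : Set ℝ := { r : ℝ | ∃ f : V → ℝ, (∀ x ∈ B, f x = 0) ∧ f ≠ 0 ∧
    r = dirichletForm G f / ∑ x ∈ Bᶜ, f x ^ 2 } with hS
  have hlam : lambda1 G B = sInf S := rfl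
  set n : ℕ := (Bᶜ : Finset V).card with hn
  have hnpos : 0 < n := Finset.card_pos.mpr hΩne
  have hnR : (0:ℝ) < (n:ℝ) := by exact_mod_cast hnpos
  set d : V → ℕ := fun x => (B.filter fun y => G.Adj x y).card with hd
  set avg : ℝ := (m:ℝ) / (n:ℝ) with havg
  have hmsum : ∑ x ∈ Bᶜ, d x = m := by rw [hm, card_boundary_edges]
  have hmsumR : ∑ x ∈ Bᶜ, (d x : ℝ) = (m:ℝ) := by exact_mod_cast hmsum
  have hncard : ∀ x : V, {y : V | G.Adj x y ∧ y ∈ B}.ncard = d x := by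
    intro x
    have : {y : V | G.Adj x y ∧ y ∈ B} = ↑(B.filter fun y => G.Adj x y) := by
      ext y; simp [and_comm]
    rw [this, Set.ncard_coe_finset]
  -- boundedness and membership
  have hbdd : BddBelow S := by
    refine ⟨0, fun r hr => ?_⟩
    exact rayleigh_lower G B 0 le_rfl (fun x _ => by positivity) r hr
  have havg_mem : avg ∈ S := by
    refine ⟨fun x => if x ∈ B then 0 else 1, fun x hx => by simp [hx], ?_, ?_⟩
    · intro h
      obtain ⟨x, hx⟩ := hΩne
      have := congrFun h x
      simp [Finset.mem_compl.mp hx] at this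
    · have hfB : ∀ x ∈ B, (fun x => if x ∈ B then (0:ℝ) else 1) x = 0 := fun x hx => by simp [hx]
      rw [dirichlet_split G B _ hfB]
      have h0 : (∑ x ∈ Bᶜ, ∑ y ∈ Bᶜ,
          if G.Adj x y then ((if x ∈ B then (0:ℝ) else 1) - (if y ∈ B then (0:ℝ) else 1)) ^ 2 else 0) = 0 := by
        refine Finset.sum_eq_zero fun x hx => Finset.sum_eq_zero fun y hy => ?_
        simp [Finset.mem_compl.mp hx, Finset.mem_compl.mp hy]
      have h1 : ∑ x ∈ Bᶜ, ((B.filter fun y => G.Adj x y).card : ℝ) * (if x ∈ B then (0:ℝ) else 1) ^ 2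
          = (m:ℝ) := by
        rw [← hmsumR]
        refine Finset.sum_congr rfl fun x hx => ?_
        simp [Finset.mem_compl.mp hx, hd]
      have h2 : ∑ x ∈ Bᶜ, (if x ∈ B then (0:ℝ) else 1) ^ 2 = (n:ℝ) := by
        rw [show ∑ x ∈ Bᶜ, (if x ∈ B then (0:ℝ) else 1) ^ 2 = ∑ x ∈ Bᶜ, (1:ℝ) from
          Finset.sum_congr rfl fun x hx => by simp [Finset.mem_compl.mp hx]]
        simp [hn]
      rw [h0, h1, h2, havg]; norm_num
  have hle : lambda1 G B ≤ avg := by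
    rw [hlam]; exact csInf_le hbdd havg_mem
  refine ⟨hle, ?_, ?_⟩
  · -- forward: equality implies divisibility + constant boundary degree
    intro heq
    -- claim: all d x (real) equal avg on Bᶜ
    have claim : ∀ x ∈ Bᶜ, (d x : ℝ) = avg := by
      by_contra hcon
      push_neg at hcon
      obtain ⟨x₀, hx₀, hx₀ne⟩ := hcon
      obtain ⟨g, hg⟩ : ∃ g : V → ℝ, g = fun x => avg - (d x : ℝ) := ⟨_, rfl⟩
      obtain ⟨S2, hS2⟩ : ∃ S2 : ℝ, S2 = ∑ x ∈ Bᶜ, g x ^ 2 := ⟨_, rfl⟩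
      have hS2pos : 0 < S2 := by
        rw [hS2]
        refine Finset.sum_pos' (fun i _ => sq_nonneg _) ⟨x₀, hx₀, ?_⟩
        have hne : g x₀ ≠ 0 := by
          rw [hg]; exact sub_ne_zero.mpr (Ne.symm hx₀ne)
        positivity
      have hsumg : ∑ x ∈ Bᶜ, g x = 0 := by
        simp only [hg]
        rw [Finset.sum_sub_distrib, hmsumR, Finset.sum_const, nsmul_eq_mul, havg]
        field_simp
        rw [← hn]; ring
      have hsumdg : ∑ x ∈ Bᶜ, (d x : ℝ) * g x = -S2 := by
        have hterm : ∀ x ∈ Bᶜ, (d x : ℝ) * g x = -(g x ^ 2) + avg * g x := by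
          intro x _; rw [hg]; ring
        rw [Finset.sum_congr rfl hterm, Finset.sum_add_distrib, ← Finset.mul_sum, hsumg,
          mul_zero, add_zero, Finset.sum_neg_distrib, ← hS2]
      obtain ⟨C, hC⟩ : ∃ C : ℝ, C = (∑ x ∈ Bᶜ, ∑ y ∈ Bᶜ, if G.Adj x y then (g x - g y) ^ 2 else 0) / 2
          + ∑ x ∈ Bᶜ, (d x : ℝ) * g x ^ 2 := ⟨_, rfl⟩
      have hCnn : 0 ≤ C := by
        rw [hC]
        have h1 : 0 ≤ (∑ x ∈ Bᶜ, ∑ y ∈ Bᶜ, if G.Adj x y then (g x - g y) ^ 2 else 0) := by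
          refine Finset.sum_nonneg fun x _ => Finset.sum_nonneg fun y _ => ?_
          split <;> positivity
        have h2 : 0 ≤ ∑ x ∈ Bᶜ, (d x : ℝ) * g x ^ 2 :=
          Finset.sum_nonneg fun x _ => by positivity
        linarith
      have hC1 : (0:ℝ) < C + 1 := by linarith
      obtain ⟨ε, hε⟩ : ∃ ε : ℝ, ε = S2 / (C + 1) := ⟨_, rfl⟩
      have hεpos : 0 < ε := by rw [hε]; exact div_pos hS2pos hC1
      have hεC : ε * (C + 1) = S2 := by
        rw [hε, div_mul_cancel₀ _ (ne_of_gt hC1)]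
      obtain ⟨f, hf⟩ : ∃ f : V → ℝ, f = fun x => if x ∈ B then 0 else 1 + ε * g x := ⟨_, rfl⟩
      have hfB : ∀ x ∈ B, f x = 0 := fun x hx => by simp [hf, hx]
      have hfΩ : ∀ x ∈ Bᶜ, f x = 1 + ε * g x := fun x hx => by
        simp [hf, Finset.mem_compl.mp hx]
      have hQ : ∑ x ∈ Bᶜ, f x ^ 2 = (n:ℝ) + ε ^ 2 * S2 := by
        have hterm : ∀ x ∈ Bᶜ, f x ^ 2 = 1 + (2 * ε) * g x + ε ^ 2 * g x ^ 2 := by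
          intro x hx; rw [hfΩ x hx]; ring
        rw [Finset.sum_congr rfl hterm, Finset.sum_add_distrib, Finset.sum_add_distrib,
          ← Finset.mul_sum, ← Finset.mul_sum, hsumg, mul_zero, add_zero, ← hS2,
          Finset.sum_const, nsmul_eq_mul, mul_one]
      have hQpos : 0 < ∑ x ∈ Bᶜ, f x ^ 2 := by
        rw [hQ]
        have h1 : 0 ≤ ε ^ 2 * S2 := mul_nonneg (sq_nonneg ε) hS2pos.le
        linarith
      have hD : dirichletForm G f = (m:ℝ) - 2 * ε * S2 + ε ^ 2 * C := by
        rw [dirichlet_split G B f hfB]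
        have hSΩ : (∑ x ∈ Bᶜ, ∑ y ∈ Bᶜ, if G.Adj x y then (f x - f y) ^ 2 else 0)
            = ε ^ 2 * ∑ x ∈ Bᶜ, ∑ y ∈ Bᶜ, (if G.Adj x y then (g x - g y) ^ 2 else 0) := by
          rw [Finset.mul_sum]
          refine Finset.sum_congr rfl fun x hx => ?_
          rw [Finset.mul_sum]
          refine Finset.sum_congr rfl fun y hy => ?_
          rw [hfΩ x hx, hfΩ y hy]
          split <;> ring
        have hdsum : ∑ x ∈ Bᶜ, ((B.filter fun y => G.Adj x y).card : ℝ) * f x ^ 2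
            = (m:ℝ) + 2 * ε * (-S2) + ε ^ 2 * ∑ x ∈ Bᶜ, (d x : ℝ) * g x ^ 2 := by
          have hterm : ∀ x ∈ Bᶜ, ((B.filter fun y => G.Adj x y).card : ℝ) * f x ^ 2
              = (d x : ℝ) + (2 * ε) * ((d x : ℝ) * g x) + ε ^ 2 * ((d x : ℝ) * g x ^ 2) := by
            intro x hx; rw [hfΩ x hx]; simp only [hd]; ring
          rw [Finset.sum_congr rfl hterm, Finset.sum_add_distrib, Finset.sum_add_distrib,
            ← Finset.mul_sum, ← Finset.mul_sum, hmsumR, hsumdg]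
        rw [hSΩ, hdsum, hC]; ring
      have hmem : dirichletForm G f / ∑ x ∈ Bᶜ, f x ^ 2 ∈ S := by
        refine ⟨f, hfB, ?_, rfl⟩
        intro h
        rw [h] at hQpos
        simp only [Pi.zero_apply, ne_eq, OfNat.ofNat_ne_zero, not_false_eq_true,
          zero_pow, Finset.sum_const_zero] at hQpos
        exact lt_irrefl _ hQpos
      have hlt : dirichletForm G f / ∑ x ∈ Bᶜ, f x ^ 2 < avg := by
        rw [div_lt_iff₀ hQpos, hD, hQ, havg]
        have hmn : (m:ℝ) / (n:ℝ) * ((n:ℝ) + ε ^ 2 * S2) = (m:ℝ) + (m:ℝ) / (n:ℝ) * (ε ^ 2 * S2) := by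
          rw [mul_add]; congr 1; field_simp
        rw [hmn]
        have havgnn : 0 ≤ (m:ℝ) / (n:ℝ) * (ε ^ 2 * S2) :=
          mul_nonneg (div_nonneg (Nat.cast_nonneg m) (Nat.cast_nonneg n))
            (mul_nonneg (sq_nonneg ε) hS2pos.le)
        have key : ε * C < 2 * S2 := by nlinarith [hεC, hεpos, hS2pos]
        have key2 : ε * (ε * C) < ε * (2 * S2) := mul_lt_mul_of_pos_left key hεpos
        nlinarith [key2, havgnn]
      have hfin : lambda1 G B < avg :=
        lt_of_le_of_lt (by rw [hlam]; exact csInf_le hbdd hmem) hlt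
      rw [heq] at hfin
      exact lt_irrefl _ hfin
    -- extract divisibility and values
    have hdn : ∀ x ∈ (Bᶜ : Finset V), d x * n = m := by
      intro x hx
      have h1 : (d x : ℝ) * (n:ℝ) = (m:ℝ) := by
        rw [claim x hx, havg]; field_simp
      exact_mod_cast h1
    obtain ⟨x₁, hx₁⟩ := hΩne
    have hdvd : n ∣ m := Dvd.intro _ (by rw [mul_comm]; exact hdn x₁ hx₁)
    refine ⟨hdvd, fun x hx => ?_⟩
    have hx' : x ∈ (Bᶜ : Finset V) := Finset.mem_compl.mpr hx
    rw [hncard x, ← hdn x hx', Nat.mul_div_cancel _ hnpos]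
  · -- backward: divisibility + constant degree implies equality
    rintro ⟨hdvd, hconst⟩
    set k : ℕ := m / n with hk
    have hmk : m = n * k := (Nat.div_mul_cancel hdvd).symm.trans (mul_comm _ _)
    have havgk : avg = (k:ℝ) := by
      rw [havg, hmk]; push_cast; field_simp
    have hdk : ∀ x ∈ (Bᶜ : Finset V), d x = k := by
      intro x hx
      rw [← hncard x]
      exact hconst x (Finset.mem_compl.mp hx)
    have hge : (k:ℝ) ≤ lambda1 G B := by
      rw [hlam]
      refine le_csInf ⟨avg, havg_mem⟩ fun r hr => ?_
      refine rayleigh_lower G B (k:ℝ) (by positivity) (fun x hx => ?_) r hr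
      rw [show ((B.filter fun y => G.Adj x y).card : ℕ) = d x from rfl, hdk x hx]
    rw [← havgk] at hge
    exact le_antisymm hle hge
end

section
/- Let a₁, a₂, …, a_ℓ be real numbers (ℓ ≥ 1) and let s_i = a₁ + a₂ + ⋯ + a_i be the partial sums. Then s_i² ≤ i·Σ_{j=1}^{i} a_j² for every 1 ≤ i ≤ ℓ, and Σ_{i=1}^{ℓ} s_i² ≤ (1/(4·sin²(π/(4ℓ+2))))·Σ_{i=1}^{ℓ} a_i². -/
open Finset Real

private lemma tel1 (θ : ℝ) (i : ℕ) :
    (2 * Real.sin (θ/2)) * ∑ j ∈ Finset.Icc 1 i, Real.cos ((2*(j:ℝ)-1)*θ/2)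
      = Real.sin ((i:ℝ)*θ) := by
  induction i with
  | zero => simp
  | succ n ih =>
    rw [Finset.sum_Icc_succ_top (by omega : 1 ≤ n + 1)]
    have h := Real.sin_sub_sin (((n:ℝ)+1)*θ) ((n:ℝ)*θ)
    have h1 : (((n:ℝ)+1)*θ - (n:ℝ)*θ)/2 = θ/2 := by ring
    have h2 : (((n:ℝ)+1)*θ + (n:ℝ)*θ)/2 = (2*((n:ℝ)+1)-1)*θ/2 := by ring
    rw [h1, h2] at h
    push_cast
    push_cast at ih
    nlinarith [ih, h]

private lemma tel2 (θ : ℝ) (j ℓ : ℕ) (hj : 1 ≤ j) (hjl : j ≤ ℓ) :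
    (2 * Real.sin (θ/2)) * ∑ i ∈ Finset.Icc j ℓ, Real.sin ((i:ℝ)*θ)
      = Real.cos ((2*(j:ℝ)-1)*θ/2) - Real.cos ((2*(ℓ:ℝ)+1)*θ/2) := by
  induction ℓ, hjl using Nat.le_induction with
  | base =>
    rw [Finset.Icc_self, Finset.sum_singleton]
    have h := Real.cos_sub_cos ((2*(j:ℝ)-1)*θ/2) ((2*(j:ℝ)+1)*θ/2)
    have h1 : ((2*(j:ℝ)-1)*θ/2 + (2*(j:ℝ)+1)*θ/2)/2 = (j:ℝ)*θ := by ring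
    have h2 : ((2*(j:ℝ)-1)*θ/2 - (2*(j:ℝ)+1)*θ/2)/2 = -(θ/2) := by ring
    rw [h1, h2, Real.sin_neg] at h
    nlinarith [h]
  | succ n hn ih =>
    rw [Finset.sum_Icc_succ_top (by omega : j ≤ n + 1)]
    have h := Real.cos_sub_cos ((2*(n:ℝ)+1)*θ/2) ((2*((n:ℝ)+1)+1)*θ/2)
    have h1 : ((2*(n:ℝ)+1)*θ/2 + (2*((n:ℝ)+1)+1)*θ/2)/2 = ((n:ℝ)+1)*θ := by ring
    have h2 : ((2*(n:ℝ)+1)*θ/2 - (2*((n:ℝ)+1)+1)*θ/2)/2 = -(θ/2) := by ring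
    rw [h1, h2, Real.sin_neg] at h
    push_cast
    push_cast at ih
    nlinarith [ih, h]

theorem stmt8 (ℓ : ℕ) (hℓ : 1 ≤ ℓ) (a : ℕ → ℝ) :
    (∀ i : ℕ, 1 ≤ i → i ≤ ℓ →
      (∑ j ∈ Finset.Icc 1 i, a j) ^ 2 ≤ (i : ℝ) * ∑ j ∈ Finset.Icc 1 i, (a j) ^ 2) ∧
    ∑ i ∈ Finset.Icc 1 ℓ, (∑ j ∈ Finset.Icc 1 i, a j) ^ 2 ≤
      (1 / (4 * Real.sin (Real.pi / (4 * (ℓ : ℝ) + 2)) ^ 2)) *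
        ∑ i ∈ Finset.Icc 1 ℓ, (a i) ^ 2 := by
  constructor
  · intro i hi1 hi2
    have := sq_sum_le_card_mul_sum_sq (s := Finset.Icc 1 i) (f := a)
    simpa [Nat.card_Icc] using this
  -- setup
  set θ : ℝ := Real.pi / (2*(ℓ:ℝ)+1) with hθ
  have hlpos : (0:ℝ) < (ℓ:ℝ) := by exact_mod_cast hℓ
  have hden : (0:ℝ) < 2*(ℓ:ℝ)+1 := by linarith
  have hθpos : 0 < θ := div_pos Real.pi_pos hden
  have hθhalf : θ/2 = Real.pi / (4 * (ℓ:ℝ) + 2) := by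
    rw [hθ, div_div]; congr 1; ring
  have key : (2*(ℓ:ℝ)+1)*θ = Real.pi := by
    rw [hθ]; field_simp
  have hs : 0 < Real.sin (θ/2) := by
    apply Real.sin_pos_of_pos_of_lt_pi (by linarith)
    rw [hθhalf]
    calc Real.pi / (4 * (ℓ:ℝ) + 2) ≤ Real.pi / 2 := by
          apply div_le_div_of_nonneg_left Real.pi_pos.le (by norm_num) (by linarith)
      _ < Real.pi := by linarith [Real.pi_pos]
  set q : ℕ → ℝ := fun j => Real.cos ((2*(j:ℝ)-1)*θ/2) with hq
  have hqpos : ∀ j : ℕ, 1 ≤ j → j ≤ ℓ → 0 < q j := by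
    intro j hj1 hj2
    apply Real.cos_pos_of_mem_Ioo
    constructor
    · have : (0:ℝ) < (2*(j:ℝ)-1) := by
        have : (1:ℝ) ≤ (j:ℝ) := by exact_mod_cast hj1
        linarith
      nlinarith [Real.pi_pos, mul_pos this hθpos]
    · have hjr : (j:ℝ) ≤ (ℓ:ℝ) := by exact_mod_cast hj2
      have h1 : (1:ℝ) ≤ (j:ℝ) := by exact_mod_cast hj1
      nlinarith [hθpos, key]
  have hppos : ∀ i : ℕ, 1 ≤ i → i ≤ ℓ → 0 < Real.sin ((i:ℝ)*θ) := by
    intro i hi1 hi2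
    apply Real.sin_pos_of_pos_of_lt_pi
    · have : (1:ℝ) ≤ (i:ℝ) := by exact_mod_cast hi1
      nlinarith
    · have hir : (i:ℝ) ≤ (ℓ:ℝ) := by exact_mod_cast hi2
      nlinarith [hθpos, key]
  have hs2 : (2 * Real.sin (θ/2)) ≠ 0 := by positivity
  -- Cauchy-Schwarz step
  have step1 : ∀ i : ℕ, 1 ≤ i → i ≤ ℓ →
      (∑ j ∈ Finset.Icc 1 i, a j) ^ 2 ≤
        (Real.sin ((i:ℝ)*θ) / (2 * Real.sin (θ/2))) *
          ∑ j ∈ Finset.Icc 1 i, (a j)^2 / q j := by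
    intro i hi1 hi2
    have hcs := Finset.sum_mul_sq_le_sq_mul_sq (Finset.Icc 1 i)
      (fun j => Real.sqrt (q j)) (fun j => a j / Real.sqrt (q j))
    have h1 : ∀ j ∈ Finset.Icc 1 i, Real.sqrt (q j) * (a j / Real.sqrt (q j)) = a j := by
      intro j hjm
      rw [Finset.mem_Icc] at hjm
      have := hqpos j hjm.1 (le_trans hjm.2 hi2)
      field_simp [Real.sqrt_ne_zero'.mpr this]
    have h2 : ∀ j ∈ Finset.Icc 1 i, (Real.sqrt (q j))^2 = q j := by
      intro j hjm
      rw [Finset.mem_Icc] at hjm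
      exact Real.sq_sqrt (hqpos j hjm.1 (le_trans hjm.2 hi2)).le
    have h3 : ∀ j ∈ Finset.Icc 1 i, (a j / Real.sqrt (q j))^2 = (a j)^2 / q j := by
      intro j hjm
      rw [Finset.mem_Icc] at hjm
      rw [div_pow, Real.sq_sqrt (hqpos j hjm.1 (le_trans hjm.2 hi2)).le]
    rw [Finset.sum_congr rfl h1, Finset.sum_congr rfl h2, Finset.sum_congr rfl h3] at hcs
    have hsum : ∑ j ∈ Finset.Icc 1 i, q j = Real.sin ((i:ℝ)*θ) / (2 * Real.sin (θ/2)) := by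
      rw [eq_div_iff hs2, mul_comm]
      exact tel1 θ i
    rwa [hsum] at hcs
  -- sum the bound
  have step2 : ∑ i ∈ Finset.Icc 1 ℓ, (∑ j ∈ Finset.Icc 1 i, a j) ^ 2 ≤
      ∑ i ∈ Finset.Icc 1 ℓ, (Real.sin ((i:ℝ)*θ) / (2 * Real.sin (θ/2))) *
        ∑ j ∈ Finset.Icc 1 i, (a j)^2 / q j := by
    apply Finset.sum_le_sum
    intro i him
    rw [Finset.mem_Icc] at him
    exact step1 i him.1 him.2
  refine le_trans step2 (le_of_eq ?_)
  -- exact computation of the RHS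
  have swap : ∑ i ∈ Finset.Icc 1 ℓ, (Real.sin ((i:ℝ)*θ) / (2 * Real.sin (θ/2))) *
      ∑ j ∈ Finset.Icc 1 i, (a j)^2 / q j
      = ∑ j ∈ Finset.Icc 1 ℓ, ∑ i ∈ Finset.Icc j ℓ,
          (Real.sin ((i:ℝ)*θ) / (2 * Real.sin (θ/2))) * ((a j)^2 / q j) := by
    simp_rw [Finset.mul_sum, ← Finset.Ico_add_one_right_eq_Icc]
    exact (Finset.sum_Ico_Ico_comm 1 (ℓ+1)
      (fun j i => (Real.sin ((i:ℝ)*θ) / (2 * Real.sin (θ/2))) * ((a j)^2 / q j))).symm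
  rw [swap]
  have hend : Real.cos ((2*(ℓ:ℝ)+1)*θ/2) = 0 := by
    have h2 : (2*(ℓ:ℝ)+1)*θ/2 = Real.pi/2 := by linarith [key]
    rw [h2, Real.cos_pi_div_two]
  have inner : ∀ j ∈ Finset.Icc 1 ℓ,
      ∑ i ∈ Finset.Icc j ℓ, (Real.sin ((i:ℝ)*θ) / (2 * Real.sin (θ/2))) * ((a j)^2 / q j)
      = (1 / (4 * Real.sin (θ/2) ^ 2)) * (a j)^2 := by
    intro j hjm
    rw [Finset.mem_Icc] at hjm
    have htel := tel2 θ j ℓ hjm.1 hjm.2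
    rw [hend, sub_zero] at htel
    have hqne : q j ≠ 0 := (hqpos j hjm.1 hjm.2).ne'
    have hq2 : q j = Real.cos ((2*(j:ℝ)-1)*θ/2) := rfl
    rw [← hq2] at htel
    have hSne : (∑ i ∈ Finset.Icc j ℓ, Real.sin ((i:ℝ)*θ)) ≠ 0 := by
      intro h
      rw [h, mul_zero] at htel
      exact hqne htel.symm
    rw [← Finset.sum_mul, ← Finset.sum_div, ← htel]
    field_simp
    rw [show (∑ x ∈ Icc j ℓ, sin (θ * (x:ℝ))) = ∑ x ∈ Icc j ℓ, sin ((x:ℝ) * θ) from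
      Finset.sum_congr rfl fun x _ => by rw [mul_comm]]
    linear_combination (a j ^ 2 * 4) * mul_inv_cancel₀ hSne
  rw [Finset.sum_congr rfl inner, ← Finset.mul_sum, hθhalf]
end

section
/- Let ℓ ≥ 2 and α ≥ 1 be integers and let G = PC(ℓ,α) be the path-cliques graph with boundary B = {v₀, v_{2ℓ}} and interior Ω = V∖B. Then |Ω| = (2ℓ−1)·α, the diameter of G is D = 2ℓ, and λ₁(G,B) ≤ 12/(|Ω|·D). -/
open scoped Classical
open Finset

/-- Vertex type of the path-cliques graph `PC(ℓ, α)`: the path vertices `v₀, …, v_{2ℓ}`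
together with, for each `1 ≤ i ≤ 2ℓ-1`, a copy of the vertex set of `K_{α-1}`. -/
abbrev PCVert (l α : ℕ) : Type := Fin (2 * l + 1) ⊕ (Fin (2 * l - 1) × Fin (α - 1))

/-- Base relation generating the edges of the path-cliques graph: consecutive path
vertices are adjacent, the `i`-th clique (0-indexed) is completely joined to `v_{i+1}`,
and vertices within the same clique copy are pairwise adjacent. -/
def PCRel (l α : ℕ) : PCVert l α → PCVert l α → Prop
  | Sum.inl i, Sum.inl j => (i : ℕ) + 1 = (j : ℕ)
  | Sum.inl i, Sum.inr jm => (i : ℕ) = (jm.1 : ℕ) + 1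
  | Sum.inr jm, Sum.inr jm' => jm.1 = jm'.1
  | _, _ => False

/-- The path-cliques graph `PC(ℓ, α)`. -/
def PC (l α : ℕ) : SimpleGraph (PCVert l α) := SimpleGraph.fromRel (PCRel l α)

def pcLevel {l α : ℕ} : PCVert l α → ℕ := Sum.elim Fin.val fun jm => jm.1.val + 1

lemma pc_adj_level {l α : ℕ} {x y : PCVert l α} (h : (PC l α).Adj x y) :
    pcLevel x ≤ pcLevel y + 1 ∧ pcLevel y ≤ pcLevel x + 1 := by
  rw [PC, SimpleGraph.fromRel_adj] at h
  obtain ⟨-, h⟩ := h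
  rcases x with i | jm <;> rcases y with j | jm' <;>
    simp only [PCRel, pcLevel, Sum.elim_inl, Sum.elim_inr, or_false, false_or, or_self] at h ⊢ <;> omega

lemma pc_walk_level {l α : ℕ} {x y : PCVert l α} (p : (PC l α).Walk x y) :
    pcLevel x ≤ pcLevel y + p.length ∧ pcLevel y ≤ pcLevel x + p.length := by
  induction p with
  | nil => simp
  | cons h p ih =>
    have := pc_adj_level h
    simp only [SimpleGraph.Walk.length_cons]
    omega

lemma pc_path_walk {l α : ℕ} (k : ℕ) :
    ∀ a b : Fin (2*l+1), (b : ℕ) = (a : ℕ) + k →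
    ∃ p : (PC l α).Walk (Sum.inl a) (Sum.inl b), p.length = k := by
  induction k with
  | zero =>
    intro a b h
    have : a = b := Fin.ext (by omega)
    subst this
    exact ⟨SimpleGraph.Walk.nil, rfl⟩
  | succ k ih =>
    intro a b h
    have hc : (a : ℕ) + 1 < 2*l+1 := by omega
    set c : Fin (2*l+1) := ⟨(a : ℕ) + 1, hc⟩ with hcdef
    have hadj : (PC l α).Adj (Sum.inl a) (Sum.inl c) := by
      rw [PC, SimpleGraph.fromRel_adj]
      refine ⟨by simp [hcdef, Fin.ext_iff], Or.inl ?_⟩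
      simp [PCRel, hcdef]
    obtain ⟨q, hq⟩ := ih c b (by simp [hcdef]; omega)
    exact ⟨SimpleGraph.Walk.cons hadj q, by simp [hq]⟩

lemma pc_walk_between {l α : ℕ} (a b : Fin (2*l+1)) :
    ∃ p : (PC l α).Walk (Sum.inl a) (Sum.inl b),
      p.length = max (a : ℕ) (b : ℕ) - min (a : ℕ) (b : ℕ) := by
  rcases le_total (a : ℕ) (b : ℕ) with hab | hab
  · obtain ⟨p, hp⟩ := pc_path_walk (l := l) (α := α) ((b : ℕ) - (a : ℕ)) a b (by omega)
    exact ⟨p, by omega⟩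
  · obtain ⟨p, hp⟩ := pc_path_walk (l := l) (α := α) ((a : ℕ) - (b : ℕ)) b a (by omega)
    exact ⟨p.reverse, by simp [hp]; omega⟩

lemma pc_adj_clique {l α : ℕ} (j : Fin (2*l-1)) (m : Fin (α-1)) (h : (j:ℕ)+1 < 2*l+1) :
    (PC l α).Adj (Sum.inl ⟨(j:ℕ)+1, h⟩) (Sum.inr (j, m)) := by
  rw [PC, SimpleGraph.fromRel_adj]
  exact ⟨by simp, Or.inl (by simp [PCRel])⟩

lemma pc_dist_le {l α : ℕ} (hl : 1 ≤ l) (x y : PCVert l α) : (PC l α).dist x y ≤ 2*l := by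
  have key : ∀ (a : Fin (2*l+1)) (jm : Fin (2*l-1) × Fin (α-1)),
      (PC l α).dist (Sum.inl a) (Sum.inr jm) ≤ 2*l := by
    intro a jm
    obtain ⟨j, m⟩ := jm
    have hj : (j:ℕ)+1 < 2*l+1 := by have := j.isLt; omega
    obtain ⟨p, hp⟩ := pc_walk_between (l := l) (α := α) a ⟨(j:ℕ)+1, hj⟩
    have := SimpleGraph.dist_le (p.concat (pc_adj_clique j m hj))
    rw [SimpleGraph.Walk.length_concat, hp] at this
    have ha := a.isLt
    have hj' := j.isLt
    simp only [Fin.val_mk] at this ⊢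
    omega
  rcases x with a | jm
  · rcases y with b | jm'
    · obtain ⟨p, hp⟩ := pc_walk_between (l := l) (α := α) a b
      have := SimpleGraph.dist_le p
      have ha := a.isLt; have hb := b.isLt
      omega
    · exact key a jm'
  · rcases y with b | jm'
    · rw [SimpleGraph.dist_comm]; exact key b jm
    · obtain ⟨j, m⟩ := jm
      obtain ⟨j', m'⟩ := jm'
      have hj : (j:ℕ)+1 < 2*l+1 := by have := j.isLt; omega
      have hj'lt : (j':ℕ)+1 < 2*l+1 := by have := j'.isLt; omega
      obtain ⟨p, hp⟩ := pc_walk_between (l := l) (α := α) ⟨(j:ℕ)+1, hj⟩ ⟨(j':ℕ)+1, hj'lt⟩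
      have := SimpleGraph.dist_le
        ((SimpleGraph.Walk.cons (pc_adj_clique j m hj).symm p).concat (pc_adj_clique j' m' hj'lt))
      rw [SimpleGraph.Walk.length_concat, SimpleGraph.Walk.length_cons, hp] at this
      have h1 := j.isLt; have h2 := j'.isLt
      simp only [Fin.val_mk] at this ⊢
      omega

lemma pc_dist_ends {l α : ℕ} :
    (PC l α).dist (Sum.inl 0) (Sum.inl (Fin.last (2*l)) : PCVert l α) = 2*l := by
  obtain ⟨p, hp⟩ := pc_walk_between (l := l) (α := α) 0 (Fin.last (2*l))
  have hle : (PC l α).dist (Sum.inl 0) (Sum.inl (Fin.last (2*l)) : PCVert l α) ≤ 2*l := by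
    have := SimpleGraph.dist_le p
    simp [Fin.last] at hp
    omega
  have hreach : (PC l α).Reachable (Sum.inl 0) (Sum.inl (Fin.last (2*l)) : PCVert l α) := ⟨p⟩
  obtain ⟨q, hq⟩ := hreach.exists_walk_length_eq_dist
  have := pc_walk_level q
  simp only [pcLevel, Sum.elim_inl, Fin.val_last, Fin.val_zero] at this
  omega

lemma pc_diam {l α : ℕ} (hl : 1 ≤ l) : 
    (Finset.univ.sup fun v : PCVert l α => Finset.univ.sup fun w => (PC l α).dist v w) = 2*l := by
  apply le_antisymm
  · exact Finset.sup_le fun v _ => Finset.sup_le fun w _ => pc_dist_le hl v w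
  · calc (2*l : ℕ) = (PC l α).dist (Sum.inl 0) (Sum.inl (Fin.last (2*l))) := pc_dist_ends.symm
      _ ≤ Finset.univ.sup fun w => (PC l α).dist (Sum.inl 0) w :=
          Finset.le_sup (Finset.mem_univ _)
      _ ≤ _ := Finset.le_sup (f := fun v : PCVert l α => Finset.univ.sup fun w => (PC l α).dist v w)
          (Finset.mem_univ _)

def pcg (l : ℕ) (i : ℕ) : ℕ := min i (2*l - i)

-- adjacency between non-inl-inl pairs implies equal levels
lemma pc_adj_level_eq {l α : ℕ} {x y : PCVert l α} (h : (PC l α).Adj x y)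
    (hxy : ∀ i j : Fin (2*l+1), ¬(x = Sum.inl i ∧ y = Sum.inl j)) :
    pcLevel x = pcLevel y := by
  rw [PC, SimpleGraph.fromRel_adj] at h
  obtain ⟨-, h⟩ := h
  rcases x with i | jm <;> rcases y with j | jm'
  · exact absurd ⟨rfl, rfl⟩ (hxy i j)
  · simp only [PCRel, or_false, false_or] at h
    simp [pcLevel, h]
  · simp only [PCRel, or_false, false_or] at h
    simp [pcLevel, h]
  · simp only [PCRel, or_self] at h
    rcases h with h | h
    · simp [pcLevel, h]
    · simp [pcLevel, ← h]

lemma ind_le_one {n c : ℕ} : ∑ j : Fin n, (if (j:ℕ) = c then (1:ℝ) else 0) ≤ 1 := by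
  rw [Fin.sum_univ_eq_sum_range (fun k => if k = c then (1:ℝ) else 0)]
  rw [Finset.sum_ite_eq' (range n) c (fun _ => (1:ℝ))]
  split <;> norm_num

lemma ind2_le_one {n c : ℕ} : ∑ j : Fin n, (if (j:ℕ)+1 = c then (1:ℝ) else 0) ≤ 1 := by
  rcases c with _ | c
  · simp
  · simp only [add_left_inj]
    exact ind_le_one

lemma pc_energy {l α : ℕ} :
    dirichletForm (PC l α) (fun x => (pcg l (pcLevel x) : ℝ)) ≤ 2*(l:ℝ)+1 := by
  unfold dirichletForm
  rw [div_le_iff₀ (by norm_num : (0:ℝ) < 2)]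
  set F : PCVert l α → ℝ := fun x => (pcg l (pcLevel x) : ℝ) with hF
  have inner : ∀ x : PCVert l α,
      (∑ y : PCVert l α, if (PC l α).Adj x y then (F x - F y)^2 else 0) ≤
      Sum.elim (fun _ : Fin (2*l+1) => (2:ℝ)) (fun _ => (0:ℝ)) x := by
    intro x
    rcases x with i | q
    · -- bound by indicator sums
      have hterm : ∀ y : PCVert l α,
          (if (PC l α).Adj (Sum.inl i) y then (F (Sum.inl i) - F y)^2 else 0) ≤
          Sum.elim (fun j : Fin (2*l+1) =>
            (if (j:ℕ) = (i:ℕ)+1 then (1:ℝ) else 0) + (if (j:ℕ)+1 = (i:ℕ) then (1:ℝ) else 0))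
            (fun _ => (0:ℝ)) y := by
        intro y
        rcases y with j | q
        · simp only [Sum.elim_inl]
          split
          · rename_i hadj
            rw [PC, SimpleGraph.fromRel_adj] at hadj
            obtain ⟨-, hrel⟩ := hadj
            simp only [PCRel] at hrel
            have hsq : (F (Sum.inl i) - F (Sum.inl j))^2 ≤ 1 := by
              have h1 : pcg l (pcLevel (Sum.inl i : PCVert l α)) ≤
                  pcg l (pcLevel (Sum.inl j : PCVert l α)) + 1 ∧
                  pcg l (pcLevel (Sum.inl j : PCVert l α)) ≤
                  pcg l (pcLevel (Sum.inl i : PCVert l α)) + 1 := by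
                simp only [pcg, pcLevel, Sum.elim_inl]
                omega
              have c1 : (F (Sum.inl i) : ℝ) ≤ F (Sum.inl j) + 1 := by
                simp only [hF]; exact_mod_cast h1.1
              have c2 : (F (Sum.inl j) : ℝ) ≤ F (Sum.inl i) + 1 := by
                simp only [hF]; exact_mod_cast h1.2
              nlinarith [c1, c2]
            have hind : (1:ℝ) ≤ (if (j:ℕ) = (i:ℕ)+1 then (1:ℝ) else 0) +
                (if (j:ℕ)+1 = (i:ℕ) then (1:ℝ) else 0) := by
              rcases hrel with h | h
              · rw [if_pos h.symm]
                have : (0:ℝ) ≤ if (j:ℕ)+1 = (i:ℕ) then (1:ℝ) else 0 := by positivity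
                linarith
              · rw [if_pos h]
                have : (0:ℝ) ≤ if (j:ℕ) = (i:ℕ)+1 then (1:ℝ) else 0 := by positivity
                linarith
            linarith
          · positivity
        · simp only [Sum.elim_inr]
          split
          · rename_i hadj
            have := pc_adj_level_eq hadj (by rintro _ _ ⟨-, h⟩; exact absurd h (by simp))
            simp only [hF, this, sub_self]
            norm_num
          · exact le_rfl
      calc (∑ y : PCVert l α, if (PC l α).Adj (Sum.inl i) y then (F (Sum.inl i) - F y)^2 else 0)
          ≤ ∑ y : PCVert l α, Sum.elim (fun j : Fin (2*l+1) =>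
            (if (j:ℕ) = (i:ℕ)+1 then (1:ℝ) else 0) + (if (j:ℕ)+1 = (i:ℕ) then (1:ℝ) else 0))
            (fun _ => (0:ℝ)) y := Finset.sum_le_sum (fun y _ => hterm y)
        _ = (∑ j : Fin (2*l+1), ((if (j:ℕ) = (i:ℕ)+1 then (1:ℝ) else 0) +
              (if (j:ℕ)+1 = (i:ℕ) then (1:ℝ) else 0))) := by
            rw [Fintype.sum_sum_type]
            simp
        _ ≤ 2 := by
            rw [Finset.sum_add_distrib]
            have := ind_le_one (n := 2*l+1) (c := (i:ℕ)+1)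
            have := ind2_le_one (n := 2*l+1) (c := (i:ℕ))
            linarith
    · simp only [Sum.elim_inr]
      apply le_of_eq
      apply Finset.sum_eq_zero
      intro y _
      split
      · rename_i hadj
        have := pc_adj_level_eq hadj (by rintro _ _ ⟨h, -⟩; exact absurd h (by simp))
        simp [hF, this]
      · rfl
  calc (∑ x : PCVert l α, ∑ y : PCVert l α, if (PC l α).Adj x y then (F x - F y)^2 else 0)
      ≤ ∑ x : PCVert l α, Sum.elim (fun _ : Fin (2*l+1) => (2:ℝ)) (fun _ => (0:ℝ)) x :=
        Finset.sum_le_sum (fun x _ => inner x)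
    _ = (2*(l:ℝ)+1) * 2 := by
        rw [Fintype.sum_sum_type]
        simp [Finset.sum_const, Fintype.card_fin]
        all_goals (push_cast; ring)

lemma sq_sum_formula (n : ℕ) : 6 * ∑ i ∈ range (n+1), i^2 = n*(n+1)*(2*n+1) := by
  induction n with
  | zero => simp
  | succ n ih => rw [Finset.sum_range_succ, Nat.mul_add, ih]; ring

lemma pcg_sum (l : ℕ) (hl : 1 ≤ l) :
    6 * ∑ i ∈ range (2*l+1), (pcg l i)^2 = 4*l^3 + 2*l := by
  have hsplit : ∑ i ∈ range (2*l+1), (pcg l i)^2 =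
      ∑ i ∈ range (l+1), (pcg l i)^2 + ∑ i ∈ Ico (l+1) (2*l+1), (pcg l i)^2 := by
    rw [Finset.range_eq_Ico, ← Finset.sum_Ico_consecutive _ (by omega : 0 ≤ l+1) (by omega : l+1 ≤ 2*l+1), Finset.range_eq_Ico]
  have h1 : ∑ i ∈ range (l+1), (pcg l i)^2 = ∑ i ∈ range (l+1), i^2 := by
    apply Finset.sum_congr rfl
    intro i hi
    rw [Finset.mem_range] at hi
    have : pcg l i = i := by unfold pcg; omega
    rw [this]
  have h2 : ∑ i ∈ Ico (l+1) (2*l+1), (pcg l i)^2 = ∑ k ∈ range l, k^2 := by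
    rw [Finset.sum_Ico_eq_sum_range]
    have he : 2*l+1 - (l+1) = l := by omega
    rw [he]
    rw [← Finset.sum_range_reflect (fun k => k^2) l]
    apply Finset.sum_congr rfl
    intro k hk
    rw [Finset.mem_range] at hk
    have : pcg l (l+1+k) = l - 1 - k := by unfold pcg; omega
    rw [this]
  rw [hsplit, h1, h2, Nat.mul_add, sq_sum_formula l]
  obtain ⟨m, rfl⟩ : ∃ m, l = m + 1 := ⟨l - 1, by omega⟩
  have : range (m+1+1-1) = range (m+1) := by congr 1
  rw [show m+1 = (m)+1 from rfl]
  rw [show (range (m+1)) = range (m+1) from rfl, sq_sum_formula m]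
  ring

lemma pc_denom (l α : ℕ) (hl : 1 ≤ l) (hα : 1 ≤ α) :
    ∑ x ∈ ({Sum.inl 0, Sum.inl (Fin.last (2 * l))} : Finset (PCVert l α))ᶜ,
      (pcg l (pcLevel x) : ℝ)^2 =
    (α : ℝ) * ∑ i ∈ range (2*l+1), ((pcg l i : ℝ))^2 := by
  set B : Finset (PCVert l α) := {Sum.inl 0, Sum.inl (Fin.last (2 * l))} with hB
  set f : PCVert l α → ℝ := fun x => (pcg l (pcLevel x) : ℝ)^2 with hf
  have hzero : ∀ x ∈ B, f x = 0 := by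
    intro x hx
    rw [hB, Finset.mem_insert, Finset.mem_singleton] at hx
    rcases hx with rfl | rfl <;>
      simp [hf, pcg, pcLevel]
  have hcompl : ∑ x ∈ Bᶜ, f x = ∑ x : PCVert l α, f x := by
    have := Finset.sum_add_sum_compl B f
    rw [Finset.sum_eq_zero hzero, zero_add] at this
    exact this
  have huniv : ∑ x : PCVert l α, f x =
      (∑ i ∈ range (2*l+1), ((pcg l i : ℝ))^2) +
      ((α - 1 : ℕ) : ℝ) * ∑ j ∈ range (2*l-1), ((pcg l (j+1) : ℝ))^2 := by
    rw [Fintype.sum_sum_type]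
    congr 1
    · rw [← Fin.sum_univ_eq_sum_range (fun k => ((pcg l k : ℝ))^2)]
      rfl
    · rw [Fintype.sum_prod_type]
      rw [← Fin.sum_univ_eq_sum_range (fun k => ((pcg l (k+1) : ℝ))^2)]
      rw [Finset.mul_sum]
      apply Finset.sum_congr rfl
      intro j _
      have hy : ∀ y : Fin (α-1), f (Sum.inr (j, y)) = ((pcg l ((j:ℕ)+1) : ℝ))^2 := fun y => by
        simp [hf, pcLevel]
      rw [Finset.sum_congr rfl (fun y _ => hy y), Finset.sum_const]
      simp [Finset.card_univ, mul_comm]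
  have hshift : ∑ j ∈ range (2*l-1), ((pcg l (j+1) : ℝ))^2 =
      ∑ i ∈ range (2*l+1), ((pcg l i : ℝ))^2 := by
    have e1 : (2*l+1) = (2*l) + 1 := rfl
    rw [e1, Finset.sum_range_succ]
    have e2 : (2*l) = (2*l-1) + 1 := by omega
    rw [e2, Finset.sum_range_succ']
    have g0 : pcg l 0 = 0 := by unfold pcg; omega
    have glast : pcg l ((2*l-1)+1) = 0 := by unfold pcg; omega
    rw [g0, glast]
    norm_num
  rw [hcompl, huniv, hshift]
  have : ((α - 1 : ℕ) : ℝ) = (α : ℝ) - 1 := by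
    rw [Nat.cast_sub hα]; norm_num
  rw [this]; ring

lemma dirichletForm_nonneg {V : Type*} [Fintype V] (G : SimpleGraph V) (f : V → ℝ) :
    0 ≤ dirichletForm G f := by
  unfold dirichletForm
  apply div_nonneg _ (by norm_num)
  apply Finset.sum_nonneg; intro x _
  apply Finset.sum_nonneg; intro y _
  split
  · positivity
  · exact le_rfl

lemma lambda1_le_quotient {V : Type*} [Fintype V] (G : SimpleGraph V) (B : Finset V)
    (f : V → ℝ) (h0 : ∀ x ∈ B, f x = 0) (hne : f ≠ 0) (c d : ℝ)
    (hd : ∑ x ∈ Bᶜ, f x ^ 2 = d)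
    (hc : dirichletForm G f / d ≤ c) :
    lambda1 G B ≤ c := by
  refine le_trans (csInf_le ?_ ⟨f, h0, hne, by rw [hd]⟩) hc
  refine ⟨0, ?_⟩
  rintro r ⟨g, -, -, rfl⟩
  exact div_nonneg (dirichletForm_nonneg _ _) (Finset.sum_nonneg fun x _ => sq_nonneg _)

lemma pc_card (l α : ℕ) (hl : 2 ≤ l) (hα : 1 ≤ α) :
    ((({Sum.inl 0, Sum.inl (Fin.last (2 * l))} : Finset (PCVert l α))ᶜ).card = (2 * l - 1) * α) := by
  rw [Finset.card_compl]
  have hne : (Sum.inl 0 : PCVert l α) ≠ Sum.inl (Fin.last (2*l)) := by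
    simp only [ne_eq, Sum.inl.injEq]
    intro h
    have := congrArg Fin.val h
    simp [Fin.val_last] at this
    omega
  rw [Finset.card_insert_of_notMem (by simp [hne]), Finset.card_singleton]
  have hcard : Fintype.card (PCVert l α) = (2*l+1) + (2*l-1)*(α-1) := by
    simp [Fintype.card_sum, Fintype.card_prod, Fintype.card_fin]
  rw [hcard]
  obtain ⟨b, rfl⟩ : ∃ b, α = b+1 := ⟨α-1, by omega⟩
  have hb : b + 1 - 1 = b := rfl
  rw [hb, Nat.mul_add, Nat.mul_one]
  have hgen : ∀ t : ℕ, (2*l+1) + t - (1+1) = t + (2*l-1) := by intro t; omega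
  exact hgen _

theorem stmt9 (l α : ℕ) (hl : 2 ≤ l) (hα : 1 ≤ α) :
    ((({Sum.inl 0, Sum.inl (Fin.last (2 * l))} : Finset (PCVert l α))ᶜ).card = (2 * l - 1) * α) ∧
    graphDiam (PC l α) = 2 * l ∧
    lambda1 (PC l α) ({Sum.inl 0, Sum.inl (Fin.last (2 * l))} : Finset (PCVert l α)) ≤
      12 / (((({Sum.inl 0, Sum.inl (Fin.last (2 * l))} : Finset (PCVert l α))ᶜ).card : ℝ) *
        (graphDiam (PC l α) : ℝ)) := by
  have h1 := pc_card l α hl hα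
  have h2 : graphDiam (PC l α) = 2 * l := by
    unfold graphDiam; exact pc_diam (by omega)
  refine ⟨h1, h2, ?_⟩
  rw [h1, h2]
  have hden := pc_denom l α (by omega) hα
  set T : ℝ := ∑ i ∈ range (2*l+1), ((pcg l i : ℝ))^2 with hTdef
  have hvan : ∀ x ∈ ({Sum.inl 0, Sum.inl (Fin.last (2 * l))} : Finset (PCVert l α)),
      ((pcg l (pcLevel x) : ℝ)) = 0 := by
    intro x hx
    rw [Finset.mem_insert, Finset.mem_singleton] at hx
    rcases hx with rfl | rfl <;> simp [pcg, pcLevel]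
  have hne : (fun x : PCVert l α => (pcg l (pcLevel x) : ℝ)) ≠ 0 := by
    intro h
    have h0 := congrFun h (Sum.inl ⟨l, by omega⟩)
    simp only [Pi.zero_apply, pcLevel, Sum.elim_inl, pcg, Nat.cast_eq_zero] at h0
    omega
  refine lambda1_le_quotient (PC l α) _ _ hvan hne _ ((α:ℝ) * T) ?_ ?_
  · rw [← hden]; congr!
  · -- quotient bound
    have hT : (6:ℝ) * T = 4*(l:ℝ)^3 + 2*(l:ℝ) := by
      have hnat := pcg_sum l (by omega)
      have hcast : ((6 * ∑ i ∈ range (2*l+1), (pcg l i)^2 : ℕ) : ℝ) = ((4*l^3 + 2*l : ℕ) : ℝ) := by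
        exact_mod_cast congrArg (Nat.cast : ℕ → ℝ) hnat
      push_cast at hcast
      rw [hTdef]
      convert hcast using 2
    have hlR : (2:ℝ) ≤ (l:ℝ) := by exact_mod_cast hl
    have hαR : (1:ℝ) ≤ (α:ℝ) := by exact_mod_cast hα
    have hl3 : (0:ℝ) < (l:ℝ)^3 := pow_pos (by linarith) 3
    have hTpos : 0 < T := by linarith
    have hDenpos : (0:ℝ) < (α:ℝ) * T := by positivity
    have hNDpos : (0:ℝ) < (((2*l-1)*α : ℕ) : ℝ) * ((2*l : ℕ) : ℝ) := by
      have a1 : (0:ℝ) < (((2*l-1)*α : ℕ) : ℝ) := by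
        exact_mod_cast Nat.mul_pos (by omega) (by omega)
      have a2 : (0:ℝ) < ((2*l : ℕ) : ℝ) := by exact_mod_cast (by omega : 0 < 2*l)
      exact mul_pos a1 a2
    rw [div_le_div_iff₀ hDenpos hNDpos]
    have hE := pc_energy (l := l) (α := α)
    have hE0 := dirichletForm_nonneg (PC l α) (fun x : PCVert l α => (pcg l (pcLevel x) : ℝ))
    have hND : (((2*l-1)*α : ℕ) : ℝ) * ((2*l : ℕ) : ℝ) = (2*(l:ℝ)-1)*(α:ℝ)*(2*(l:ℝ)) := by
      push_cast [Nat.cast_sub (by omega : 1 ≤ 2*l)]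
      ring
    rw [hND]
    have hfac : (0:ℝ) ≤ (2*(l:ℝ)-1)*(α:ℝ)*(2*(l:ℝ)) := by nlinarith
    have step1 : dirichletForm (PC l α) (fun x : PCVert l α => (pcg l (pcLevel x) : ℝ)) *
        ((2*(l:ℝ)-1)*(α:ℝ)*(2*(l:ℝ))) ≤ (2*(l:ℝ)+1) * ((2*(l:ℝ)-1)*(α:ℝ)*(2*(l:ℝ))) :=
      mul_le_mul_of_nonneg_right hE hfac
    have h12 : 12 * ((α:ℝ) * T) = 2*(α:ℝ)*(4*(l:ℝ)^3 + 2*(l:ℝ)) := by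
      rw [show (12:ℝ) * ((α:ℝ)*T) = 2*(α:ℝ)*(6*T) by ring, hT]
    have step2 : (2*(l:ℝ)+1) * ((2*(l:ℝ)-1)*(α:ℝ)*(2*(l:ℝ))) ≤
        2*(α:ℝ)*(4*(l:ℝ)^3 + 2*(l:ℝ)) := by
      nlinarith [mul_nonneg (by linarith : (0:ℝ) ≤ (l:ℝ)) (by linarith : (0:ℝ) ≤ (α:ℝ))]
    linarith [step1, step2]
end

section
/- Let (G,B) be a finite graph with boundary and let 𝒫 be a finite collection of interior–boundary paths in G. Suppose 𝒫 is a c-covering on vertices, a p-packing on edges, and every path in 𝒫 has length at most ℓ (with c, p, ℓ positive integers). Then λ₁(G,B) ≥ (4c/p)·sin²(π/(4ℓ+2)) ≥ c/(p·ℓ²). -/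
open scoped Classical
open Finset

/-! ### Auxiliary lemmas -/

lemma aux_sq_ineq (a b x y : ℝ) (ha : 0 < a) (hb : 0 < b) :
    (1 - b/a)*x^2 + (1 - a/b)*y^2 ≤ (x-y)^2 := by
  have key : (x-y)^2 - ((1 - b/a)*x^2 + (1 - a/b)*y^2) = (b*x - a*y)^2/(a*b) := by
    field_simp
    ring
  nlinarith [div_nonneg (sq_nonneg (b*x-a*y)) (mul_pos ha hb).le]

lemma aux_sin_half_sq (x : ℝ) : 4 * Real.sin (x/2)^2 = 2 - 2 * Real.cos x := by
  have h1 := Real.sin_sq (x/2)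
  have h2 := Real.cos_sq (x/2)
  have h : 2 * (x/2) = x := by ring
  rw [h] at h2
  nlinarith

lemma aux_sin_lb (ℓ : ℕ) (hℓ : 1 ≤ ℓ) : 1/(2*(ℓ:ℝ)) ≤ Real.sin (Real.pi/(4*(ℓ:ℝ)+2)) := by
  have hl1 : (1:ℝ) ≤ (ℓ:ℝ) := by exact_mod_cast hℓ
  set a : ℝ := 3/(2*(ℓ:ℝ)+1) with ha
  have hden : (0:ℝ) < 2*(ℓ:ℝ)+1 := by linarith
  have ha0 : 0 ≤ a := by positivity
  have ha1 : a ≤ 1 := by rw [ha, div_le_one hden]; linarith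
  have hmem : Real.pi/6 ∈ Set.Icc (0:ℝ) Real.pi := by
    constructor
    · positivity
    · nlinarith [Real.pi_pos]
  have hmem0 : (0:ℝ) ∈ Set.Icc (0:ℝ) Real.pi := ⟨le_rfl, Real.pi_pos.le⟩
  have hcc := (strictConcaveOn_sin_Icc).concaveOn.2 hmem hmem0 ha0
      (by linarith : (0:ℝ) ≤ 1 - a) (by ring)
  simp only [smul_eq_mul, mul_zero, add_zero, Real.sin_zero] at hcc
  rw [Real.sin_pi_div_six] at hcc
  have harg : a * (Real.pi/6) = Real.pi/(4*(ℓ:ℝ)+2) := by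
    rw [ha]; field_simp; ring
  rw [harg] at hcc
  have hfin : 1/(2*(ℓ:ℝ)) ≤ a * (1/2) := by
    rw [ha, div_mul_eq_mul_div, div_le_div_iff₀ (by linarith) (by linarith)]
    ring_nf
    nlinarith
  linarith

lemma pathPoincare (n : ℕ) (hn : 1 ≤ n) (g : ℕ → ℝ) (hg : g n = 0) :
    4 * Real.sin (Real.pi / (4*(n:ℝ)+2)) ^ 2 * ∑ i ∈ Finset.range n, g i ^ 2
      ≤ ∑ i ∈ Finset.range n, (g i - g (i+1)) ^ 2 := by
  obtain ⟨m, rfl⟩ : ∃ m, n = m + 1 := ⟨n - 1, (Nat.succ_pred_eq_of_pos hn).symm⟩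
  clear hn
  set n := m + 1 with hndef
  have hnR : (0:ℝ) < 2*(n:ℝ)+1 := by positivity
  set θ : ℝ := Real.pi / (2*(n:ℝ)+1) with hθ
  have hθpos : 0 < θ := by positivity
  set lam : ℝ := 2 - 2 * Real.cos θ with hlam
  have hlam_eq : 4 * Real.sin (Real.pi / (4*(n:ℝ)+2)) ^ 2 = lam := by
    have h42 : (4*(n:ℝ)+2) = (2*(n:ℝ)+1)*2 := by ring
    have : Real.pi / (4*(n:ℝ)+2) = θ/2 := by rw [hθ, div_div, h42]
    rw [this, aux_sin_half_sq]
  set φ : ℕ → ℝ := fun i => Real.cos ((2*(i:ℝ)+1)*θ/2) with hφ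
  have hφpos : ∀ i, i < n → 0 < φ i := by
    intro i hi
    apply Real.cos_pos_of_mem_Ioo
    constructor
    · have : 0 < (2*(i:ℝ)+1)*θ/2 := by positivity
      linarith [Real.pi_pos, this]
    · have hθπ : θ * (2*(n:ℝ)+1) = Real.pi := by rw [hθ]; field_simp
      have hiR : (i:ℝ) ≤ (m:ℝ) := by exact_mod_cast Nat.lt_succ_iff.mp hi
      have hnm : (n:ℝ) = (m:ℝ) + 1 := by exact_mod_cast hndef
      have hlt : (2*(i:ℝ)+1) < 2*(n:ℝ)+1 := by rw [hnm]; linarith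
      have h2 := mul_lt_mul_of_pos_right hlt hθpos
      nlinarith [h2, hθπ]
  have hφn : φ n = 0 := by
    have : (2*(n:ℝ)+1)*θ/2 = Real.pi/2 := by
      rw [hθ]; field_simp
    rw [hφ]; simp only []; rw [this, Real.cos_pi_div_two]
  have key : ∀ a : ℝ, Real.cos (a + θ) + Real.cos (a - θ) = 2 * Real.cos θ * Real.cos a := by
    intro a; rw [Real.cos_add, Real.cos_sub]; ring
  have hrec2 : ∀ i : ℕ, φ (i+2) + φ i = (2 - lam) * φ (i+1) := by
    intro i
    have h1 : (2*((i:ℝ)+2)+1)*θ/2 = (2*((i:ℝ)+1)+1)*θ/2 + θ := by ring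
    have h2 : (2*(i:ℝ)+1)*θ/2 = (2*((i:ℝ)+1)+1)*θ/2 - θ := by ring
    have := key ((2*((i:ℝ)+1)+1)*θ/2)
    rw [hφ]; simp only []
    push_cast
    rw [h1, h2, this, hlam]
    ring
  have hrec0 : φ 1 = (2 - lam) * φ 0 - φ 0 := by
    have h1 : (2*(1:ℝ)+1)*θ/2 = θ/2 + θ := by ring
    have h2 : θ/2 - θ = -(θ/2) := by ring
    have := key (θ/2)
    rw [h2, Real.cos_neg] at this
    rw [hφ]; simp only []
    push_cast
    have h0 : (2*(0:ℝ)+1)*θ/2 = θ/2 := by ring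
    rw [h1, h0, hlam]
    linear_combination this
  set A : ℕ → ℝ := fun i => (1 - φ (i+1)/φ i) * g i ^2 with hA
  set E : ℕ → ℝ := fun i => if i+1 < n then (1 - φ i/φ (i+1)) * g (i+1)^2 else 0 with hE
  have hD : ∀ i ∈ Finset.range n, A i + E i ≤ (g i - g (i+1))^2 := by
    intro i hi
    rw [Finset.mem_range] at hi
    by_cases h : i + 1 < n
    · rw [hE]; simp only [if_pos h]
      rw [hA]; simp only []
      exact aux_sq_ineq _ _ _ _ (hφpos i hi) (hφpos (i+1) h)
    · have hin : i + 1 = n := by omega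
      rw [hE]; simp only [if_neg h, add_zero]
      rw [hA]; simp only []
      have hg1 : g (i+1) = 0 := by rw [hin]; exact hg
      have hφ1 : φ (i+1) = 0 := by rw [hin]; exact hφn
      rw [hg1, hφ1, zero_div, sub_zero, one_mul, sub_zero]
  have hsum_eq : ∑ i ∈ Finset.range n, lam * g i ^2 = ∑ i ∈ Finset.range n, (A i + E i) := by
    rw [Finset.sum_add_distrib]
    rw [Finset.sum_range_succ' (fun i => lam * g i ^2) m]
    rw [Finset.sum_range_succ' A m]
    rw [Finset.sum_range_succ E m]
    have hEm : E m = 0 := by rw [hE]; exact if_neg (lt_irrefl n)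
    have hA0 : A 0 = lam * g 0 ^2 := by
      rw [hA]; simp only []
      have h0 : φ 0 ≠ 0 := (hφpos 0 (by omega)).ne'
      have : 1 - φ 1 / φ 0 = lam := by
        rw [hrec0]; field_simp; ring
      rw [this]
    have hAi : ∀ i < m, lam * g (i+1) ^2 = A (i+1) + E i := by
      intro i hi
      have hin : i + 1 < n := by omega
      rw [hA, hE]; simp only [if_pos hin]
      have hne : φ (i+1) ≠ 0 := (hφpos (i+1) hin).ne'
      have h2 : φ (i+2) + φ i = (2 - lam) * φ (i+1) := hrec2 i
      have : (1 - φ (i+1+1)/φ (i+1)) + (1 - φ i/φ (i+1)) = lam := by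
        have : φ (i+1+1) = φ (i+2) := by norm_num
        rw [this]
        field_simp
        linarith [h2]
      nlinarith [this]
    rw [hEm, add_zero]
    rw [Finset.sum_congr rfl (fun i hi => hAi i (Finset.mem_range.mp hi))]
    rw [Finset.sum_add_distrib, hA0]
    ring
  rw [hlam_eq, Finset.mul_sum]
  calc ∑ i ∈ Finset.range n, lam * g i ^ 2 = ∑ i ∈ Finset.range n, (A i + E i) := hsum_eq
    _ ≤ ∑ i ∈ Finset.range n, (g i - g (i+1))^2 := Finset.sum_le_sum hD

lemma lam_mono (a b : ℕ) (h1 : 1 ≤ a) (h2 : a ≤ b) :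
    4 * Real.sin (Real.pi/(4*(b:ℝ)+2))^2 ≤ 4 * Real.sin (Real.pi/(4*(a:ℝ)+2))^2 := by
  have haR : (1:ℝ) ≤ (a:ℝ) := by exact_mod_cast h1
  have habR : (a:ℝ) ≤ (b:ℝ) := by exact_mod_cast h2
  have hπ := Real.pi_pos
  have hxy : Real.pi/(4*(b:ℝ)+2) ≤ Real.pi/(4*(a:ℝ)+2) := by
    apply div_le_div_of_nonneg_left hπ.le (by linarith) (by linarith)
  have hy2 : Real.pi/(4*(a:ℝ)+2) ≤ Real.pi/2 := by
    apply div_le_div_of_nonneg_left hπ.le (by norm_num) (by linarith)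
  have hx0 : 0 ≤ Real.pi/(4*(b:ℝ)+2) := by positivity
  have hsin : Real.sin (Real.pi/(4*(b:ℝ)+2)) ≤ Real.sin (Real.pi/(4*(a:ℝ)+2)) := by
    apply Real.strictMonoOn_sin.monotoneOn ⟨by linarith, by linarith⟩ ⟨by linarith, by linarith⟩ hxy
  have hb0 : 0 ≤ Real.sin (Real.pi/(4*(b:ℝ)+2)) :=
    Real.sin_nonneg_of_nonneg_of_le_pi hx0 (by linarith)
  nlinarith [pow_le_pow_left₀ hb0 hsin 2]

noncomputable def eQ {V : Type*} (f : V → ℝ) : Sym2 V → ℝ :=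
  Sym2.lift ⟨fun x y => (f x - f y)^2, fun x y => by ring⟩

lemma eQ_mk {V : Type*} (f : V → ℝ) (x y : V) : eQ f s(x, y) = (f x - f y)^2 := rfl

lemma eQ_nonneg {V : Type*} (f : V → ℝ) (e : Sym2 V) : 0 ≤ eQ f e := by
  induction e with
  | _ x y => rw [eQ_mk]; positivity

lemma walk_energy {V : Type*} {G : SimpleGraph V} {u v : V} (w : G.Walk u v) (f : V → ℝ) :
    ∑ i ∈ Finset.range w.length, (f (w.getVert i) - f (w.getVert (i+1)))^2
      = (w.edges.map (eQ f)).sum := by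
  induction w with
  | nil => simp
  | cons h p ih =>
    rw [SimpleGraph.Walk.edges_cons, List.map_cons, List.sum_cons,
      SimpleGraph.Walk.length_cons, Finset.sum_range_succ']
    simp only [SimpleGraph.Walk.getVert_cons_succ, SimpleGraph.Walk.getVert_zero]
    rw [ih, eQ_mk]
    ring

lemma walk_support_sum {V : Type*} {G : SimpleGraph V} {u v : V} (w : G.Walk u v) (h : V → ℝ) :
    (w.support.map h).sum = ∑ i ∈ Finset.range (w.length+1), h (w.getVert i) := by
  induction w with
  | nil => simp
  | cons a p ih =>
    rw [SimpleGraph.Walk.support_cons, List.map_cons, List.sum_cons,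
      SimpleGraph.Walk.length_cons, Finset.sum_range_succ']
    simp only [SimpleGraph.Walk.getVert_cons_succ, SimpleGraph.Walk.getVert_zero]
    rw [ih]
    ring

lemma list_ite_count {α : Type*} (l : List α) (p : α → Prop) [DecidablePred p] (r : ℝ) :
    (l.map fun a => if p a then r else 0).sum = (l.countP fun a => decide (p a)) * r := by
  induction l with
  | nil => simp
  | cons a t ih =>
    rw [List.map_cons, List.sum_cons, List.countP_cons, ih]
    by_cases h : p a <;> simp [h] <;> push_cast <;> ring

lemma list_sum_finset_sum {α β : Type*} [Fintype β] (l : List α) (F : α → β → ℝ) :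
    (l.map fun a => ∑ x : β, F a x).sum = ∑ x : β, (l.map fun a => F a x).sum := by
  induction l with
  | nil => simp
  | cons a t ih => simp [ih, Finset.sum_add_distrib]

lemma nodup_map_sum {β : Type*} [Fintype β] (l : List β) (hl : l.Nodup) (h : β → ℝ) :
    (l.map h).sum = ∑ x : β, if x ∈ l then h x else 0 := by
  rw [← List.sum_toFinset h hl, ← Finset.sum_filter]
  congr 1
  ext x
  simp

lemma dart_sum {V : Type*} [Fintype V] (G : SimpleGraph V) (F : V → V → ℝ) :
    ∑ x : V, ∑ y : V, (if G.Adj x y then F x y else 0) = ∑ d : G.Dart, F d.fst d.snd := by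
  rw [← Finset.sum_product' Finset.univ Finset.univ (fun x y => if G.Adj x y then F x y else 0)]
  rw [← Finset.sum_filter, Finset.univ_product_univ]
  have hiff : ∀ q : V × V, q ∈ Finset.univ.filter (fun q : V × V => G.Adj q.1 q.2)
      ↔ G.Adj q.1 q.2 := by intro q; simp
  rw [Finset.sum_subtype _ hiff (fun q : V × V => F q.1 q.2)]
  exact (Fintype.sum_equiv ⟨fun d => ⟨d.toProd, d.adj⟩, fun q => ⟨q.1, q.2⟩,
    fun d => by cases d; rfl, fun q => by cases q; rfl⟩
    (fun d : G.Dart => F d.fst d.snd) _ (fun d => rfl)).symm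

lemma dart_sum_edges {V : Type*} [Fintype V] (G : SimpleGraph V) (Q : Sym2 V → ℝ) :
    ∑ d : G.Dart, Q d.edge = 2 * ∑ e ∈ G.edgeFinset, Q e := by
  rw [← Finset.sum_fiberwise_of_maps_to
    (fun (d : G.Dart) (_ : d ∈ Finset.univ) => SimpleGraph.mem_edgeFinset.mpr d.edge_mem)
    (fun d => Q d.edge)]
  rw [Finset.mul_sum]
  apply Finset.sum_congr rfl
  intro e he
  have hQ : ∀ d ∈ Finset.univ.filter (fun d : G.Dart => d.edge = e), Q d.edge = Q e := by
    intro d hd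
    rw [(Finset.mem_filter.mp hd).2]
  rw [Finset.sum_congr rfl hQ, Finset.sum_const, nsmul_eq_mul]
  rw [G.dart_edge_fiber_card e (SimpleGraph.mem_edgeFinset.mp he)]
  norm_num

lemma dirichlet_eq_edges {V : Type*} [Fintype V] (G : SimpleGraph V) (f : V → ℝ) :
    dirichletForm G f = ∑ e ∈ G.edgeFinset, eQ f e := by
  rw [dirichletForm, dart_sum G (fun x y => (f x - f y)^2)]
  have h2 : ∑ d : G.Dart, (f d.toProd.1 - f d.toProd.2)^2 = ∑ d : G.Dart, eQ f d.edge :=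
    Finset.sum_congr rfl (fun d _ => by rcases d with ⟨⟨a,b⟩,hd⟩; rfl)
  rw [h2, dart_sum_edges]
  ring

lemma countP_deceq {α : Type*} (l : List α) (p : α → Prop) (i1 i2 : DecidablePred p) :
    (l.countP fun a => @decide (p a) (i1 a)) = (l.countP fun a => @decide (p a) (i2 a)) := by
  induction l with
  | nil => rfl
  | cons a t ih =>
    rw [List.countP_cons, List.countP_cons, ih]
    congr 1
    by_cases h : p a
    · rw [if_pos (by simp [h]), if_pos (by simp [h])]
    · rw [if_neg (by simp [h]), if_neg (by simp [h])]

lemma master_count {α β : Type*} [Fintype β] (L : List α) (s : α → List β)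
    (hs : ∀ a ∈ L, (s a).Nodup) (h : β → ℝ) :
    (L.map fun a => ((s a).map h).sum).sum
      = ∑ x : β, ((L.countP fun a => decide (x ∈ s a) : ℕ) : ℝ) * h x := by
  rw [List.map_congr_left (fun a ha => nodup_map_sum (s a) (hs a ha) h), list_sum_finset_sum]
  exact Finset.sum_congr rfl fun x _ => list_ite_count L (fun a => x ∈ s a) (h x)

lemma decide_true_imp {p : Prop} {i : Decidable p} (h : @decide p i = true) : p := by
  cases i with
  | isTrue hp => exact hp
  | isFalse hn => exact absurd (by simpa using h) hn

lemma countP_zero_mul {α : Type*} (l : List α) (q : α → Bool) (hq : ∀ a ∈ l, ¬ q a = true)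
    (r t : ℝ) : ((l.countP q : ℕ) : ℝ) * r ≤ t * 0 := by
  rw [List.countP_eq_zero.mpr hq]
  simp

theorem stmt12' {V : Type*} [Fintype V] (G : SimpleGraph V) (B : Finset V)
    (hΩne : (Bᶜ : Finset V).Nonempty)
    (c p ℓ : ℕ) (hc : 1 ≤ c) (hp : 1 ≤ p) (hℓ : 1 ≤ ℓ)
    (Ps : List (Σ u : V, Σ v : V, G.Walk u v))
    (hpaths : ∀ P ∈ Ps, P.2.2.IsPath ∧ P.1 ∉ B ∧ P.2.1 ∈ B ∧ P.2.2.length ≤ ℓ)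
    (hcover : ∀ x : V, x ∉ B → c ≤ Ps.countP fun P => decide (x ∈ P.2.2.support))
    (hpack : ∀ e ∈ G.edgeSet, (Ps.countP fun P => decide (e ∈ P.2.2.edges)) ≤ p) :
    (4 * (c : ℝ) / (p : ℝ)) * Real.sin (Real.pi / (4 * (ℓ : ℝ) + 2)) ^ 2 ≤ lambda1 G B ∧
    (c : ℝ) / ((p : ℝ) * (ℓ : ℝ) ^ 2) ≤
      (4 * (c : ℝ) / (p : ℝ)) * Real.sin (Real.pi / (4 * (ℓ : ℝ) + 2)) ^ 2 := by
  have hπ := Real.pi_pos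
  have hℓR : (1:ℝ) ≤ (ℓ:ℝ) := by exact_mod_cast hℓ
  have hpR : (0:ℝ) < (p:ℝ) := by exact_mod_cast hp
  have hcR : (0:ℝ) < (c:ℝ) := by exact_mod_cast hc
  have hslb : 1/(2*(ℓ:ℝ)) ≤ Real.sin (Real.pi/(4*(ℓ:ℝ)+2)) := aux_sin_lb ℓ hℓ
  have hs0 : (0:ℝ) < Real.sin (Real.pi/(4*(ℓ:ℝ)+2)) :=
    lt_of_lt_of_le (div_pos one_pos (by linarith)) hslb
  constructor
  · -- the spectral bound
    have key : ∀ f : V → ℝ, (∀ x ∈ B, f x = 0) →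
        (4 * Real.sin (Real.pi/(4*(ℓ:ℝ)+2))^2) * ((c:ℝ) * ∑ x ∈ Bᶜ, f x ^ 2)
          ≤ (p:ℝ) * dirichletForm G f := by
      intro f hf
      set lamℓ : ℝ := 4 * Real.sin (Real.pi/(4*(ℓ:ℝ)+2))^2 with hlamℓ
      have hlamℓ0 : 0 ≤ lamℓ := by positivity
      set h : V → ℝ := fun x => if x ∈ B then 0 else f x ^ 2 with hh
      have hh0 : ∀ x, 0 ≤ h x := by
        intro x; rw [hh]; dsimp only; split <;> positivity
      -- per-path inequality
      have perpath : ∀ P ∈ Ps,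
          lamℓ * (P.2.2.support.map h).sum ≤ (P.2.2.edges.map (eQ f)).sum := by
        intro P hP
        obtain ⟨hPp, hPu, hPv, hPl⟩ := hpaths P hP
        set w := P.2.2 with hw
        have hn1 : 1 ≤ w.length := by
          by_contra hcon
          have h0 : w.length = 0 := by omega
          have heq : P.1 = P.2.1 := by
            have e1 := w.getVert_zero
            have e2 := w.getVert_length
            rw [h0] at e2
            exact e1.symm.trans e2
          exact hPu (heq ▸ hPv)
        have hgn : f (w.getVert w.length) = 0 := by
          rw [w.getVert_length]; exact hf _ hPv
        have hpp := pathPoincare w.length hn1 (fun i => f (w.getVert i)) hgn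
        have hsupp : (w.support.map h).sum
            ≤ ∑ i ∈ Finset.range w.length, f (w.getVert i) ^ 2 := by
          rw [walk_support_sum w h, Finset.sum_range_succ]
          have hlast : h (w.getVert w.length) = 0 := by
            rw [w.getVert_length, hh]; simp [hPv]
          rw [hlast, add_zero]
          apply Finset.sum_le_sum
          intro i _
          rw [hh]; dsimp only; split
          · positivity
          · exact le_rfl
        have hmono := lam_mono w.length ℓ hn1 hPl
        have hge0 : (0:ℝ) ≤ ∑ i ∈ Finset.range w.length, f (w.getVert i) ^ 2 :=
          Finset.sum_nonneg fun i _ => sq_nonneg _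
        calc lamℓ * (w.support.map h).sum
            ≤ lamℓ * ∑ i ∈ Finset.range w.length, f (w.getVert i) ^ 2 :=
              mul_le_mul_of_nonneg_left hsupp hlamℓ0
          _ ≤ (4 * Real.sin (Real.pi/(4*(w.length:ℝ)+2))^2)
                * ∑ i ∈ Finset.range w.length, f (w.getVert i) ^ 2 :=
              mul_le_mul_of_nonneg_right hmono hge0
          _ ≤ ∑ i ∈ Finset.range w.length, (f (w.getVert i) - f (w.getVert (i+1)))^2 := hpp
          _ = (w.edges.map (eQ f)).sum := walk_energy w f
      -- vertex sums
      have hhsum : ∑ x : V, h x = ∑ x ∈ Bᶜ, f x ^ 2 := by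
        rw [← Finset.sum_compl_add_sum B h]
        have h1 : ∑ x ∈ B, h x = 0 := Finset.sum_eq_zero (fun x hx => by rw [hh]; simp [hx])
        have h2 : ∑ x ∈ Bᶜ, h x = ∑ x ∈ Bᶜ, f x ^ 2 :=
          Finset.sum_congr rfl (fun x hx => by rw [hh]; simp [Finset.mem_compl.mp hx])
        rw [h1, h2, add_zero]
      have hSsum : (c:ℝ) * (∑ x ∈ Bᶜ, f x ^ 2)
          ≤ (Ps.map fun P => (P.2.2.support.map h).sum).sum := by
        rw [master_count Ps (fun P => P.2.2.support)
            (fun P hP => (hpaths P hP).1.support_nodup) h, ← hhsum, Finset.mul_sum]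
        apply Finset.sum_le_sum
        intro x _
        by_cases hx : x ∈ B
        · have hx0 : h x = 0 := by rw [hh]; simp [hx]
          rw [hx0]; simp
        · refine mul_le_mul_of_nonneg_right ?_ (hh0 x)
          exact Nat.cast_le.mpr ((hcover x hx).trans
            (le_of_eq (countP_deceq Ps (fun P => x ∈ P.2.2.support) _ _)))
      -- edge sums
      have hT : (Ps.map fun P => (P.2.2.edges.map (eQ f)).sum).sum
          ≤ (p:ℝ) * dirichletForm G f := by
        rw [master_count Ps (fun P => P.2.2.edges)
            (fun P hP => (hpaths P hP).1.edges_nodup) (eQ f)]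
        trans (∑ e : Sym2 V, (p:ℝ) * (if e ∈ G.edgeFinset then eQ f e else 0))
        · apply Finset.sum_le_sum
          intro e _
          by_cases he : e ∈ G.edgeSet
          · rw [if_pos (SimpleGraph.mem_edgeFinset.mpr he)]
            refine mul_le_mul_of_nonneg_right ?_ (eQ_nonneg f e)
            exact Nat.cast_le.mpr ((le_of_eq
              (countP_deceq Ps (fun P => e ∈ P.2.2.edges) _ _)).trans (hpack e he))
          · rw [if_neg (fun hcon => he (SimpleGraph.mem_edgeFinset.mp hcon))]
            refine countP_zero_mul Ps _ ?_ _ _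
            intro P hP hcon
            exact he (P.2.2.edges_subset_edgeSet (decide_true_imp hcon))
        · rw [← Finset.mul_sum, Finset.sum_ite_mem, Finset.univ_inter, dirichlet_eq_edges]
      calc lamℓ * ((c:ℝ) * ∑ x ∈ Bᶜ, f x ^ 2)
          ≤ lamℓ * (Ps.map fun P => (P.2.2.support.map h).sum).sum :=
            mul_le_mul_of_nonneg_left hSsum hlamℓ0
        _ = (Ps.map fun P => lamℓ * (P.2.2.support.map h).sum).sum :=
            (List.sum_map_mul_left _ _ _).symm
        _ ≤ (Ps.map fun P => (P.2.2.edges.map (eQ f)).sum).sum := List.sum_le_sum perpath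
        _ ≤ (p:ℝ) * dirichletForm G f := hT
    apply le_csInf
    · obtain ⟨x₀, hx₀⟩ := hΩne
      refine ⟨_, fun x => if x = x₀ then (1:ℝ) else 0, ?_, ?_, rfl⟩
      · intro x hx
        have hne : x ≠ x₀ := fun hcon => (Finset.mem_compl.mp hx₀) (hcon ▸ hx)
        simp [hne]
      · intro hcon
        have := congrFun hcon x₀
        simp at this
    · rintro r ⟨f, hf, hfne, rfl⟩
      have hSpos : 0 < ∑ x ∈ Bᶜ, f x ^ 2 := by
        obtain ⟨x₁, hx₁⟩ : ∃ x, f x ≠ 0 := by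
          by_contra hcon
          push_neg at hcon
          exact hfne (funext hcon)
        have hx₁B : x₁ ∈ Bᶜ := Finset.mem_compl.mpr (fun hmem => hx₁ (hf x₁ hmem))
        exact Finset.sum_pos' (fun x _ => sq_nonneg _) ⟨x₁, hx₁B, by positivity⟩
      rw [le_div_iff₀ hSpos]
      have hkey := key f hf
      calc 4 * (c:ℝ)/(p:ℝ) * Real.sin (Real.pi/(4*(ℓ:ℝ)+2))^2 * (∑ x ∈ Bᶜ, f x ^2)
          = (4 * Real.sin (Real.pi/(4*(ℓ:ℝ)+2))^2) * ((c:ℝ) * ∑ x ∈ Bᶜ, f x^2) / p := by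
            field_simp
        _ ≤ ((p:ℝ) * dirichletForm G f)/p := (div_le_div_iff_of_pos_right hpR).mpr hkey
        _ = dirichletForm G f := by field_simp
  · have h1 : (1/(2*(ℓ:ℝ)))^2 ≤ Real.sin (Real.pi/(4*(ℓ:ℝ)+2))^2 :=
      pow_le_pow_left₀ (by positivity) hslb 2
    have hℓ0 : (ℓ:ℝ) ≠ 0 := by linarith
    have hp0 : (p:ℝ) ≠ 0 := ne_of_gt hpR
    calc (c:ℝ)/((p:ℝ)*(ℓ:ℝ)^2) = 4*(c:ℝ)/(p:ℝ) * (1/(2*(ℓ:ℝ)))^2 := by field_simp; ring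
      _ ≤ 4*(c:ℝ)/(p:ℝ) * Real.sin (Real.pi/(4*(ℓ:ℝ)+2))^2 := by
          exact mul_le_mul_of_nonneg_left h1 (by positivity)

theorem stmt12 {V : Type*} [Fintype V] (G : SimpleGraph V) (B : Finset V)
    (hconn : G.Connected)
    (hB : ∀ b ∈ B, ∃ y, y ∉ B ∧ G.Adj b y)
    (hBind : ∀ b ∈ B, ∀ b' ∈ B, ¬ G.Adj b b')
    (hΩne : (Bᶜ : Finset V).Nonempty)
    (hΩconn : (G.induce {v : V | v ∉ B}).Connected)
    (c p ℓ : ℕ) (hc : 1 ≤ c) (hp : 1 ≤ p) (hℓ : 1 ≤ ℓ)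
    (Ps : List (Σ u : V, Σ v : V, G.Walk u v))
    (hpaths : ∀ P ∈ Ps, P.2.2.IsPath ∧ P.1 ∉ B ∧ P.2.1 ∈ B ∧ P.2.2.length ≤ ℓ)
    (hcover : ∀ x : V, x ∉ B → c ≤ Ps.countP fun P => decide (x ∈ P.2.2.support))
    (hpack : ∀ e ∈ G.edgeSet, (Ps.countP fun P => decide (e ∈ P.2.2.edges)) ≤ p) :
    (4 * (c : ℝ) / (p : ℝ)) * Real.sin (Real.pi / (4 * (ℓ : ℝ) + 2)) ^ 2 ≤ lambda1 G B ∧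
    (c : ℝ) / ((p : ℝ) * (ℓ : ℝ) ^ 2) ≤
      (4 * (c : ℝ) / (p : ℝ)) * Real.sin (Real.pi / (4 * (ℓ : ℝ) + 2)) ^ 2 :=
  stmt12' G B hΩne c p ℓ hc hp hℓ Ps hpaths hcover hpack
end
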